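/- arXiv:2510.17485 — 7 statements merged into one kernel-verified Lean document; each statement's English description precedes it below -/
import Mathlib

section
/- Let (λ_k)_{k∈ℕ} be a sequence of complex numbers with no accumulation point such that Re λ_k ≥ δ for all k ∈ ℕ, for some δ > 0, such that ∑_{k=1}^∞ [1 − |(λ_k − 1)/(λ_k + 1)|] < +∞ and |arg(λ_k)| ≤ θ for all k ∈ ℕ, for some θ ∈ (0, π/2). Then (λ_k)_{k∈ℕ} is NOT a uniqueness sequence for the (one-dimensional) Laplace transform. -/
open MeasureTheory Filter Set

noncomputable section

/-- Partial Laplace integral of `f : [0,∞) → ℂ` at `l` up to time `t`. -/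
def lapPartial (f : ℝ → ℂ) (l : ℂ) (t : ℝ) : ℂ :=
  ∫ s in Set.Ioc (0:ℝ) t, Complex.exp (-(l * s)) * f s

/-- The Laplace transform of `f` at `l` exists and equals `F`. -/
def HasLaplace (f : ℝ → ℂ) (l : ℂ) (F : ℂ) : Prop :=
  Filter.Tendsto (lapPartial f l) Filter.atTop (nhds F)

/-- The abscissa of convergence of the Laplace transform of `f`, as an extended real. -/
def laplaceAbs (f : ℝ → ℂ) : EReal :=
  sInf {x : EReal | ∃ ω : ℝ, x = (ω : EReal) ∧ ∀ l : ℂ, ω < l.re → ∃ F, HasLaplace f l F}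

/-- `lam` is a uniqueness sequence for the one-dimensional Laplace transform. -/
def IsUniquenessSeq (lam : ℕ → ℂ) : Prop :=
  ∀ f : ℝ → ℂ, MeasureTheory.LocallyIntegrableOn f (Set.Ici 0) →
    (∀ k, laplaceAbs f < (((lam k).re : ℝ) : EReal)) →
    (∀ k, HasLaplace f (lam k) 0) →
    ∀ᵐ t : ℝ, 0 ≤ t → f t = 0

/-- Partial `n`-dimensional Laplace integral of `f : [0,∞)^n → ℂ` at `l` over the box `[0,t]`. -/
def mLapPartial (n : ℕ) (f : (Fin n → ℝ) → ℂ) (l : Fin n → ℂ) (t : Fin n → ℝ) : ℂ :=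
  ∫ s in Set.pi Set.univ (fun i => Set.Ioc (0:ℝ) (t i)),
    Complex.exp (-(∑ i, l i * (s i))) * f s

/-- The `n`-dimensional Laplace transform of `f` at `l` exists (as the iterated limit
`t₁ → ∞, …, tₙ → ∞` of the partial integrals) and equals `F`. -/
def HasMLaplace (n : ℕ) (f : (Fin n → ℝ) → ℂ) (l : Fin n → ℂ) (F : ℂ) : Prop :=
  Filter.Tendsto (mLapPartial n f l) Filter.atTop (nhds F)

/-- `Ω(f)`: the region of convergence of the `n`-dimensional Laplace integral. -/
def mOmega (n : ℕ) (f : (Fin n → ℝ) → ℂ) : Set (Fin n → ℂ) :=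
  {l | ∃ F, HasMLaplace n f l F}

/-- `Ω_b(f)`: the set of `l` for which the partial Laplace integrals are bounded. -/
def mOmegaB (n : ℕ) (f : (Fin n → ℝ) → ℂ) : Set (Fin n → ℂ) :=
  {l | Bornology.IsBounded (mLapPartial n f l '' {t | ∀ i, 0 ≤ t i})}

/-- A countable family `lam : K → ℂⁿ` is a uniqueness sequence for the `n`-dimensional
Laplace transform. -/
def IsMUniquenessFamily (n : ℕ) {K : Type} [Countable K] (lam : K → Fin n → ℂ) : Prop :=
  ∀ f : (Fin n → ℝ) → ℂ,
    MeasureTheory.LocallyIntegrableOn f {t | ∀ i, 0 ≤ t i} →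
    (∃ ω : Fin n → EReal, (∀ j, ω j ≠ ⊤) ∧
      {l : Fin n → ℂ | ∀ j, ω j < (((l j).re : ℝ) : EReal)} ⊆ mOmegaB n f ∩ mOmega n f ∧
      ∀ k j, ω j < ((((lam k j).re : ℝ)) : EReal)) →
    (∀ k, HasMLaplace n f (lam k) 0) →
    ∀ᵐ t : Fin n → ℝ, (∀ i, 0 ≤ t i) → f t = 0

/-!
The sector condition makes `1 - ‖(λ - 1) / (λ + 1)‖` comparable to `1 / Re λ`, so
`∑ 1 / Re λₖ < ∞`. This is the Blaschke condition for the right half-plane: the normalised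
Blaschke product `B` with zeros `λₖ` converges to a holomorphic function on `Re z > 0` bounded by
`1`, vanishing at every `λₖ` and nowhere on `(0, δ)`. Then `G z = B z / (z + 1) ^ 2` is integrable
along vertical lines, and its Bromwich inverse `f` is a continuous function, zero on `(-∞, 0]`
(shift the line of integration to the right), whose Laplace transform is `G` on `Re z > 0`
(Fourier inversion on a vertical line). Hence `f̂ (λₖ) = 0` for all `k`, yet `f ≠ 0` because
`f̂ (δ / 2) ≠ 0`.
-/

open Complex ComplexConjugate Topology
open scoped Real FourierTransform

lemma add_one_ne_zero_of_re_nonneg {z : ℂ} (hz : 0 ≤ z.re) : z + 1 ≠ 0 := fun h => by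
  have := congrArg re h
  simp only [add_re, one_re, zero_re] at this
  linarith

lemma two_mul_re_div_le_one_sub_norm_div {z : ℂ} (hz : 0 ≤ z.re) :
    2 * z.re / ‖z + 1‖ ^ 2 ≤ 1 - ‖(z - 1) / (z + 1)‖ := by
  have hq : 0 < ‖z + 1‖ := norm_pos_iff.2 (add_one_ne_zero_of_re_nonneg hz)
  have hdiff : ‖z + 1‖ ^ 2 - ‖z - 1‖ ^ 2 = 4 * z.re := by
    simp only [Complex.sq_norm, normSq_apply, add_re, add_im, sub_re, sub_im, one_re, one_im]
    ring
  have hrw : 1 - ‖(z - 1) / (z + 1)‖ = (‖z + 1‖ ^ 2 - ‖z - 1‖ * ‖z + 1‖) / ‖z + 1‖ ^ 2 := by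
    rw [norm_div]; field_simp
  rw [hrw]
  gcongr
  nlinarith [sq_nonneg (‖z + 1‖ - ‖z - 1‖)]

lemma inv_re_le_of_abs_arg_le {z : ℂ} {δ θ : ℝ} (hδ : 0 < δ) (hre : δ ≤ z.re)
    (hθ : θ < π / 2) (harg : |arg z| ≤ θ) :
    z.re⁻¹ ≤ (1 / Real.cos θ + 1 / δ) ^ 2 / 2 * (1 - ‖(z - 1) / (z + 1)‖) := by
  have hr : 0 < z.re := hδ.trans_le hre
  have hcos : 0 < Real.cos θ :=
    Real.cos_pos_of_mem_Ioo ⟨by linarith [abs_nonneg (arg z), Real.pi_pos], hθ⟩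
  have hsector : ‖z‖ * Real.cos θ ≤ z.re := by
    calc ‖z‖ * Real.cos θ ≤ ‖z‖ * Real.cos |arg z| := by
          gcongr
          exact Real.cos_le_cos_of_nonneg_of_le_pi (abs_nonneg _) (by linarith [Real.pi_pos]) harg
      _ = z.re := by rw [Real.cos_abs, norm_mul_cos_arg]
  set C := 1 / Real.cos θ + 1 / δ
  have hC : 0 < C := by positivity
  have hnorm : ‖z + 1‖ ≤ C * z.re := by
    calc ‖z + 1‖ ≤ ‖z‖ + 1 := by simpa using norm_add_le z 1
      _ ≤ z.re / Real.cos θ + z.re / δ := by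
          gcongr
          · exact (le_div_iff₀ hcos).2 hsector
          · exact (one_le_div hδ).2 hre
      _ = C * z.re := by ring
  have hq : 0 < ‖z + 1‖ := norm_pos_iff.2 (add_one_ne_zero_of_re_nonneg hr.le)
  calc z.re⁻¹ = C ^ 2 / 2 * (2 * z.re / (C * z.re) ^ 2) := by field_simp
    _ ≤ C ^ 2 / 2 * (2 * z.re / ‖z + 1‖ ^ 2) := by gcongr
    _ ≤ _ := by gcongr; exact two_mul_re_div_le_one_sub_norm_div hr.le

lemma summable_inv_re_of_abs_arg_le {μ : ℕ → ℂ} {δ θ : ℝ} (hδ : 0 < δ)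
    (hre : ∀ k, δ ≤ (μ k).re) (hθ : θ < π / 2) (harg : ∀ k, |arg (μ k)| ≤ θ)
    (hsum : Summable fun k => 1 - ‖(μ k - 1) / (μ k + 1)‖) :
    Summable fun k => (μ k).re⁻¹ :=
  (hsum.mul_left _).of_nonneg_of_le (fun k => inv_nonneg.2 (hδ.le.trans (hre k)))
    fun k => inv_re_le_of_abs_arg_le hδ (hre k) hθ (harg k)

lemma norm_div_add_one_sq_le {w z : ℂ} (hw : ‖w‖ ≤ 1) (hz : 0 ≤ z.re) :
    ‖w / (z + 1) ^ 2‖ ≤ (1 + z.im ^ 2)⁻¹ := by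
  have hsq : 1 + z.im ^ 2 ≤ ‖z + 1‖ ^ 2 := by
    rw [Complex.sq_norm, normSq_apply]
    simp only [add_re, one_re, add_im, one_im, add_zero]
    nlinarith
  rw [norm_div, norm_pow, div_eq_mul_inv]
  calc ‖w‖ * (‖z + 1‖ ^ 2)⁻¹ ≤ 1 * (1 + z.im ^ 2)⁻¹ := by gcongr
    _ = (1 + z.im ^ 2)⁻¹ := one_mul _

/- The normalisation by `conj μ / μ` makes `1 - blaschkeFactor μ z = O(‖z‖ / Re μ)`, so the
product converges as soon as `∑ 1 / Re μₖ < ∞`. -/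
def blaschkeFactor (μ z : ℂ) : ℂ := conj μ * (μ - z) / (μ * (conj μ + z))

section BlaschkeFactor

variable {μ z : ℂ}

lemma conj_add_ne_zero_of_re_pos (hμ : 0 < μ.re) (hz : 0 ≤ z.re) : conj μ + z ≠ 0 :=
  ne_zero_of_re_pos (by simp only [add_re, conj_re]; linarith)

lemma norm_blaschkeFactor_le_one (hμ : 0 < μ.re) (hz : 0 ≤ z.re) :
    ‖blaschkeFactor μ z‖ ≤ 1 := by
  have hnum : ‖μ - z‖ ≤ ‖conj μ + z‖ := by
    rw [← sq_le_sq₀ (norm_nonneg _) (norm_nonneg _), Complex.sq_norm, Complex.sq_norm,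
      normSq_apply, normSq_apply]
    simp only [sub_re, sub_im, add_re, add_im, conj_re, conj_im]
    nlinarith [mul_nonneg hμ.le hz]
  rw [blaschkeFactor, norm_div, norm_mul, norm_mul, Complex.norm_conj,
    div_le_one (mul_pos (norm_pos_iff.2 (ne_zero_of_re_pos hμ))
      (norm_pos_iff.2 (conj_add_ne_zero_of_re_pos hμ hz)))]
  gcongr

lemma blaschkeFactor_sub_one (hμ : 0 < μ.re) (hz : 0 ≤ z.re) :
    blaschkeFactor μ z - 1 = -(2 * μ.re * z / (μ * (conj μ + z))) := by
  have htwo_re : (2 * μ.re : ℂ) = μ + conj μ := by rw [add_conj]; push_cast; ring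
  rw [blaschkeFactor, htwo_re]
  field_simp [ne_zero_of_re_pos hμ, conj_add_ne_zero_of_re_pos hμ hz]
  ring

lemma norm_blaschkeFactor_sub_one_le (hμ : 0 < μ.re) (hz : 0 ≤ z.re) :
    ‖blaschkeFactor μ z - 1‖ ≤ 2 * ‖z‖ / μ.re := by
  have hden : μ.re * μ.re ≤ ‖μ * (conj μ + z)‖ := by
    rw [norm_mul]
    refine mul_le_mul (re_le_norm μ) ((?_ : μ.re ≤ (conj μ + z).re).trans (re_le_norm _))
      hμ.le (norm_nonneg _)
    simp only [add_re, conj_re]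
    linarith
  rw [blaschkeFactor_sub_one hμ hz, norm_neg, norm_div, norm_mul, norm_mul, norm_ofNat,
    norm_real, Real.norm_of_nonneg hμ.le]
  calc 2 * μ.re * ‖z‖ / ‖μ * (conj μ + z)‖ ≤ 2 * μ.re * ‖z‖ / (μ.re * μ.re) := by gcongr
    _ = 2 * ‖z‖ / μ.re := by field_simp

lemma blaschkeFactor_ne_zero (hμ : 0 < μ.re) (hz : 0 ≤ z.re) (hμz : μ ≠ z) :
    blaschkeFactor μ z ≠ 0 :=
  div_ne_zero (mul_ne_zero ((map_ne_zero _).2 (ne_zero_of_re_pos hμ)) (sub_ne_zero.2 hμz))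
    (mul_ne_zero (ne_zero_of_re_pos hμ) (conj_add_ne_zero_of_re_pos hμ hz))

lemma differentiableOn_blaschkeFactor (hμ : 0 < μ.re) :
    DifferentiableOn ℂ (blaschkeFactor μ) {z | 0 < z.re} := fun z hz =>
  DifferentiableAt.differentiableWithinAt <| .div (by fun_prop) (by fun_prop) <|
    mul_ne_zero (ne_zero_of_re_pos hμ) (conj_add_ne_zero_of_re_pos hμ (le_of_lt hz))

end BlaschkeFactor

def blaschkeProduct (μ : ℕ → ℂ) (z : ℂ) : ℂ := ∏' k, blaschkeFactor (μ k) z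

section BlaschkeProduct

variable {μ : ℕ → ℂ}

lemma blaschkeProduct_apply_self (k : ℕ) : blaschkeProduct μ (μ k) = 0 :=
  tprod_of_exists_eq_zero ⟨k, by simp [blaschkeFactor]⟩

variable (hμ : ∀ k, 0 < (μ k).re) (hs : Summable fun k => (μ k).re⁻¹)
include hμ hs

lemma summable_norm_blaschkeFactor_sub_one {z : ℂ} (hz : 0 ≤ z.re) :
    Summable fun k => ‖blaschkeFactor (μ k) z - 1‖ :=
  (hs.mul_left (2 * ‖z‖)).of_nonneg_of_le (fun _ => norm_nonneg _)
    fun k => (norm_blaschkeFactor_sub_one_le (hμ k) hz).trans_eq (by ring)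

lemma multipliable_blaschkeFactor {z : ℂ} (hz : 0 ≤ z.re) :
    Multipliable fun k => blaschkeFactor (μ k) z := by
  simpa using multipliable_one_add_of_summable (summable_norm_blaschkeFactor_sub_one hμ hs hz)

lemma norm_blaschkeProduct_le_one {z : ℂ} (hz : 0 ≤ z.re) : ‖blaschkeProduct μ z‖ ≤ 1 :=
  le_of_tendsto' (multipliable_blaschkeFactor hμ hs hz).hasProd.norm fun _ =>
    Finset.prod_le_one (fun _ _ => norm_nonneg _) fun k _ => norm_blaschkeFactor_le_one (hμ k) hz

lemma blaschkeProduct_ne_zero {z : ℂ} (hz : 0 ≤ z.re) (hzμ : ∀ k, μ k ≠ z) :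
    blaschkeProduct μ z ≠ 0 := by
  simpa [blaschkeProduct] using tprod_one_add_ne_zero_of_summable
    (f := fun k => blaschkeFactor (μ k) z - 1)
    (by simpa using fun k => blaschkeFactor_ne_zero (hμ k) hz (hzμ k))
    (summable_norm_blaschkeFactor_sub_one hμ hs hz)

lemma hasProdLocallyUniformlyOn_blaschkeProduct :
    HasProdLocallyUniformlyOn (fun k => blaschkeFactor (μ k)) (blaschkeProduct μ)
      {z | 0 < z.re} := by
  refine hasProdLocallyUniformlyOn_of_forall_compact (isOpen_lt continuous_const continuous_re)
    fun K hK hKc => ?_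
  obtain ⟨R, hR⟩ := hKc.isBounded.exists_norm_le
  have := (hs.mul_left (2 * R)).hasProdUniformlyOn_nat_one_add hKc
    (f := fun k z => blaschkeFactor (μ k) z - 1)
    (.of_forall fun k z hz => (norm_blaschkeFactor_sub_one_le (hμ k) (hK hz).le).trans ?_)
    fun k => ((differentiableOn_blaschkeFactor (hμ k)).continuousOn.sub continuousOn_const).mono hK
  · simp only [add_sub_cancel] at this
    exact this
  · rw [div_eq_mul_inv]
    gcongr
    exacts [inv_nonneg.2 (hμ k).le, hR z hz]

lemma differentiableOn_blaschkeProduct :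
    DifferentiableOn ℂ (blaschkeProduct μ) {z | 0 < z.re} :=
  (hasProdLocallyUniformlyOn_blaschkeProduct hμ hs).differentiableOn
    (.of_forall fun _ => .fun_finsetProd fun k _ => differentiableOn_blaschkeFactor (hμ k))
    (isOpen_lt continuous_const continuous_re)

end BlaschkeProduct

lemma integral_vertical_eq_of_tendsto_horizontal {Ψ : ℂ → ℂ} {c c' : ℝ} (hcc : c ≤ c')
    (hΨ : DifferentiableOn ℂ Ψ (re ⁻¹' Icc c c'))
    (hc : Integrable fun u : ℝ => Ψ (c + u * I)) (hc' : Integrable fun u : ℝ => Ψ (c' + u * I))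
    (hhor : Tendsto (fun T : ℝ => ∫ x in c..c', Ψ (x + T * I)) (cocompact ℝ) (𝓝 0)) :
    ∫ u : ℝ, Ψ (c + u * I) = ∫ u : ℝ, Ψ (c' + u * I) := by
  have hrect (T : ℝ) : (∫ x in c..c', Ψ (x + ↑(-T) * I)) - (∫ x in c..c', Ψ (x + T * I)) +
      I • (∫ y in -T..T, Ψ (c' + y * I)) - I • (∫ y in -T..T, Ψ (c + y * I)) = 0 := by
    simpa using integral_boundary_rect_eq_zero_of_differentiableOn Ψ (c + ↑(-T) * I)
      (c' + T * I) (hΨ.mono fun z hz => by simpa [uIcc_of_le hcc] using hz.1)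
  have hlim : Tendsto (fun T : ℝ => (∫ x in c..c', Ψ (x + ↑(-T) * I)) -
      (∫ x in c..c', Ψ (x + T * I)) + I • (∫ y in -T..T, Ψ (c' + y * I)) -
      I • (∫ y in -T..T, Ψ (c + y * I))) atTop
      (𝓝 (0 - 0 + I • (∫ u : ℝ, Ψ (c' + u * I)) - I • ∫ u : ℝ, Ψ (c + u * I))) := by
    have hvert {a : ℝ} (ha : Integrable fun u : ℝ => Ψ (a + u * I)) :=
      (intervalIntegral_tendsto_integral ha tendsto_neg_atTop_atBot tendsto_id).const_smul I
    have hbot : Tendsto (fun T : ℝ => ∫ x in c..c', Ψ (x + ↑(-T) * I)) atTop (𝓝 0) :=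
      hhor.comp (tendsto_neg_atTop_atBot.mono_right atBot_le_cocompact)
    exact ((hbot.sub (hhor.mono_left atTop_le_cocompact)).add (hvert hc')).sub (hvert hc)
  have := tendsto_nhds_unique hlim (by simp_rw [hrect]; exact tendsto_const_nhds)
  simp only [sub_zero, zero_add, smul_eq_mul] at this
  exact (mul_left_cancel₀ I_ne_zero (sub_eq_zero.1 this)).symm

lemma continuous_comp_vertical {G : ℂ → ℂ} (hG : ContinuousOn G {z | 0 < z.re}) {c : ℝ}
    (hc : 0 < c) : Continuous fun u : ℝ => G (c + u * I) :=
  hG.comp_continuous (by fun_prop) fun u => by simpa using hc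

def bromwichIntegral (G : ℂ → ℂ) (c t : ℝ) : ℂ :=
  ∫ u : ℝ, G (c + u * I) * exp ((c + u * I) * t)

def inverseLaplace (G : ℂ → ℂ) (t : ℝ) : ℂ := (2 * π)⁻¹ * bromwichIntegral G 1 t

section BromwichBounds

variable {G : ℂ → ℂ} (hGb : ∀ z : ℂ, 0 < z.re → ‖G z‖ ≤ (1 + z.im ^ 2)⁻¹)
include hGb

lemma norm_mul_exp_le {z : ℂ} (hz : 0 < z.re) (t : ℝ) :
    ‖G z * exp (z * t)‖ ≤ (1 + z.im ^ 2)⁻¹ * Real.exp (z.re * t) := by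
  rw [norm_mul, norm_exp, re_mul_ofReal]
  gcongr
  exact hGb z hz

lemma norm_bromwichIntegral_le {c : ℝ} (hc : 0 < c) (t : ℝ) :
    ‖bromwichIntegral G c t‖ ≤ π * Real.exp (c * t) := by
  calc ‖bromwichIntegral G c t‖ ≤ ∫ u : ℝ, (1 + u ^ 2)⁻¹ * Real.exp (c * t) :=
        norm_integral_le_of_norm_le (integrable_inv_one_add_sq.mul_const _) <|
          .of_forall fun u => by simpa using norm_mul_exp_le hGb (z := c + u * I) (by simpa) t
    _ = π * Real.exp (c * t) := by rw [integral_mul_const, integral_univ_inv_one_add_sq]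

lemma tendsto_horizontal_bromwich {c c' : ℝ} (hc : 0 < c) (hcc : c ≤ c') (t : ℝ) :
    Tendsto (fun T : ℝ => ∫ x in c..c', G (x + T * I) * exp ((x + T * I) * t)) (cocompact ℝ)
      (𝓝 0) := by
  set K := max (Real.exp (c * t)) (Real.exp (c' * t))
  have hbound (T : ℝ) : ‖∫ x in c..c', G (x + T * I) * exp ((x + T * I) * t)‖ ≤
      (1 + T ^ 2)⁻¹ * K * |c' - c| := by
    refine intervalIntegral.norm_integral_le_of_norm_le_const fun x hx => ?_
    rw [uIoc_of_le hcc] at hx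
    have hre : (x + T * I : ℂ).re = x := by simp
    have him : (x + T * I : ℂ).im = T := by simp
    refine (norm_mul_exp_le hGb (by simpa [hre] using hc.trans hx.1) t).trans ?_
    rw [hre, him]
    gcongr
    rcases le_total 0 t with ht | ht
    · exact le_max_of_le_right (Real.exp_le_exp.2 (by nlinarith [hx.2]))
    · exact le_max_of_le_left (Real.exp_le_exp.2 (by nlinarith [hx.1]))
  have hdecay : Tendsto (fun T : ℝ => (1 + T ^ 2)⁻¹) (cocompact ℝ) (𝓝 0) := by
    refine tendsto_inv_atTop_zero.comp (tendsto_atTop_add_const_left _ _ ?_)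
    exact ((tendsto_pow_atTop two_ne_zero).comp (tendsto_norm_cocompact_atTop (E := ℝ))).congr
      fun T => by simp
  exact squeeze_zero_norm hbound (by simpa using (hdecay.mul_const K).mul_const |c' - c|)

end BromwichBounds

section InverseLaplace

variable {G : ℂ → ℂ} (hG : DifferentiableOn ℂ G {z | 0 < z.re})
  (hGb : ∀ z : ℂ, 0 < z.re → ‖G z‖ ≤ (1 + z.im ^ 2)⁻¹)
include hG hGb

lemma integrable_comp_vertical {c : ℝ} (hc : 0 < c) : Integrable fun u : ℝ => G (c + u * I) :=
  integrable_inv_one_add_sq.mono'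
    (continuous_comp_vertical hG.continuousOn hc).aestronglyMeasurable
    (.of_forall fun u => by simpa using hGb (c + u * I) (by simpa using hc))

lemma integrable_bromwich_integrand {c : ℝ} (hc : 0 < c) (t : ℝ) :
    Integrable fun u : ℝ => G (c + u * I) * exp ((c + u * I) * t) := by
  refine (integrable_inv_one_add_sq.mul_const (Real.exp (c * t))).mono'
    ((continuous_comp_vertical hG.continuousOn hc).mul (by fun_prop)).aestronglyMeasurable
    (.of_forall fun u => ?_)
  simpa using norm_mul_exp_le hGb (z := c + u * I) (by simpa using hc) t

lemma bromwichIntegral_eq {c c' : ℝ} (hc : 0 < c) (hc' : 0 < c') (t : ℝ) :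
    bromwichIntegral G c t = bromwichIntegral G c' t := by
  wlog hcc : c ≤ c' generalizing c c'
  · exact (this hc' hc (le_of_not_ge hcc)).symm
  refine integral_vertical_eq_of_tendsto_horizontal (Ψ := fun z => G z * exp (z * t)) hcc
    ?_ (integrable_bromwich_integrand hG hGb hc t) (integrable_bromwich_integrand hG hGb hc' t)
    (tendsto_horizontal_bromwich hGb hc hcc t)
  exact (hG.mono fun z hz => hc.trans_le hz.1).mul (by fun_prop)

lemma inverseLaplace_eq {c : ℝ} (hc : 0 < c) (t : ℝ) :
    inverseLaplace G t = (2 * π)⁻¹ * bromwichIntegral G c t := by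
  rw [inverseLaplace, bromwichIntegral_eq hG hGb one_pos hc]

lemma norm_inverseLaplace_le {c : ℝ} (hc : 0 < c) (t : ℝ) :
    ‖inverseLaplace G t‖ ≤ Real.exp (c * t) / 2 := by
  rw [inverseLaplace_eq hG hGb hc, norm_mul, norm_real, Real.norm_of_nonneg (by positivity)]
  calc (2 * π)⁻¹ * ‖bromwichIntegral G c t‖ ≤ (2 * π)⁻¹ * (π * Real.exp (c * t)) := by
        gcongr; exact norm_bromwichIntegral_le hGb hc t
    _ = Real.exp (c * t) / 2 := by field_simp

lemma continuous_inverseLaplace : Continuous (inverseLaplace G) := by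
  refine continuous_const.mul (continuous_iff_continuousAt.2 fun t₀ => ?_)
  refine continuousAt_of_dominated (bound := fun u : ℝ => (1 + u ^ 2)⁻¹ * Real.exp (t₀ + 1))
    (.of_forall fun t => ((continuous_comp_vertical hG.continuousOn one_pos).mul
      (by fun_prop)).aestronglyMeasurable) ?_ (integrable_inv_one_add_sq.mul_const _)
    (.of_forall fun u => by fun_prop)
  filter_upwards [eventually_lt_nhds (lt_add_one t₀)] with t ht
  refine .of_forall fun u => (norm_mul_exp_le hGb (z := 1 + u * I) (by simp) t).trans ?_
  have hre : (1 + u * I : ℂ).re = 1 := by simp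
  have him : (1 + u * I : ℂ).im = u := by simp
  rw [hre, him, one_mul]
  gcongr

/- Let the abscissa `c` of the line of integration tend to `∞` in `‖f t‖ ≤ exp (c * t) / 2`. -/
lemma inverseLaplace_eq_zero_of_neg {t : ℝ} (ht : t < 0) : inverseLaplace G t = 0 := by
  have hlim : Tendsto (fun c : ℝ => Real.exp (c * t) / 2) atTop (𝓝 0) := by
    simpa using (Real.tendsto_exp_atBot.comp (tendsto_id.atTop_mul_const_of_neg ht)).div_const 2
  exact norm_le_zero_iff.1 <| ge_of_tendsto hlim <| (eventually_gt_atTop 0).mono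
    fun c hc => norm_inverseLaplace_le hG hGb hc t

lemma inverseLaplace_eq_zero_of_nonpos {t : ℝ} (ht : t ≤ 0) : inverseLaplace G t = 0 := by
  have : Iio 0 ⊆ {t : ℝ | inverseLaplace G t = 0} := fun t ht =>
    inverseLaplace_eq_zero_of_neg hG hGb ht
  rw [← (isClosed_eq (continuous_inverseLaplace hG hGb) continuous_const).closure_subset_iff,
    closure_Iio] at this
  exact this ht

lemma integrable_exp_mul_inverseLaplace {l : ℂ} (hl : 0 < l.re) :
    Integrable fun t : ℝ => exp (-(l * t)) * inverseLaplace G t := by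
  have hmeas : AEStronglyMeasurable (fun t : ℝ => exp (-(l * t)) * inverseLaplace G t) :=
    ((by fun_prop : Continuous fun t : ℝ => exp (-(l * t))).mul
      (continuous_inverseLaplace hG hGb)).aestronglyMeasurable
  rw [← integrableOn_univ, ← Iic_union_Ioi (a := 0), integrableOn_union]
  refine ⟨integrableOn_zero.congr_fun (fun t ht => by
    simp [inverseLaplace_eq_zero_of_nonpos hG hGb ht]) measurableSet_Iic, ?_⟩
  refine ((exp_neg_integrableOn_Ioi 0 (half_pos hl)).const_mul 2⁻¹).mono' hmeas.restrict
    (.of_forall fun t => ?_)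
  rw [norm_mul, norm_exp, neg_re, re_mul_ofReal]
  calc Real.exp (-(l.re * t)) * ‖inverseLaplace G t‖
      ≤ Real.exp (-(l.re * t)) * (Real.exp (l.re / 2 * t) / 2) := by
        gcongr; exact norm_inverseLaplace_le hG hGb (half_pos hl) t
    _ = 2⁻¹ * Real.exp (-(l.re / 2) * t) := by
        rw [mul_div_assoc', ← Real.exp_add]; ring_nf

lemma fourier_comp_vertical {σ : ℝ} (hσ : 0 < σ) :
    𝓕 (fun ξ : ℝ => G (σ + ↑(-2 * π * ξ) * I)) =
      fun t : ℝ => exp (-(σ * t)) * inverseLaplace G t := by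
  funext t
  rw [Real.fourier_real_eq_integral_exp_smul, Measure.integral_comp_mul_left
      (fun u : ℝ => exp (↑(u * t) * I) • G (σ + u * I)) (-2 * π),
    inverseLaplace_eq hG hGb hσ, bromwichIntegral, ← integral_const_mul, ← integral_const_mul,
    abs_inv, abs_mul, abs_neg, abs_two, abs_of_pos Real.pi_pos, ← integral_smul]
  congr 1 with u
  have hexp : exp (-(σ * t)) * exp ((σ + u * I) * t) = exp (↑(u * t) * I) := by
    rw [← exp_add]; push_cast; ring_nf
  rw [Complex.real_smul, smul_eq_mul]
  linear_combination (-(↑(2 * π)⁻¹ * G (σ + u * I))) * hexp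

/- `t ↦ exp (-(Re l * t)) * f t` is the Fourier transform of `G` along the line `Re z = Re l`;
Fourier inversion at the frequency `-(Im l / 2π)` recovers `G l`. -/
lemma integral_exp_mul_inverseLaplace {l : ℂ} (hl : 0 < l.re) :
    ∫ t : ℝ, exp (-(l * t)) * inverseLaplace G t = G l := by
  set φ : ℝ → ℂ := fun ξ => G (l.re + ↑(-2 * π * ξ) * I)
  have hφ : Continuous φ := (continuous_comp_vertical hG.continuousOn hl).comp
    (by fun_prop : Continuous fun ξ : ℝ => -2 * π * ξ)
  have hφint : Integrable φ := (integrable_comp_vertical hG hGb hl).comp_mul_left' (by positivity)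
  have hF : 𝓕 φ = fun t : ℝ => exp (-(l.re * t)) * inverseLaplace G t :=
    fourier_comp_vertical hG hGb hl
  have hinv := congrFun (hφ.fourierInv_fourier_eq hφint
    (hF ▸ integrable_exp_mul_inverseLaplace hG hGb (l := l.re) (by simpa))) (-(l.im / (2 * π)))
  rw [Real.fourierInv_eq_fourier_neg, neg_neg, hF, Real.fourier_real_eq_integral_exp_smul] at hinv
  have hl_eq : (l.re : ℂ) + ↑(-2 * π * -(l.im / (2 * π))) * I = l := by
    rw [show -2 * π * -(l.im / (2 * π)) = l.im by field_simp]; exact re_add_im l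
  rw [show G l = φ (-(l.im / (2 * π))) by simp only [φ, hl_eq], ← hinv]
  congr 1 with t
  rw [smul_eq_mul, ← mul_assoc, ← exp_add]
  congr 2
  rw [show -2 * π * t * (l.im / (2 * π)) = -(t * l.im) by field_simp]
  conv_lhs => rw [← re_add_im l]
  push_cast
  ring

lemma hasLaplace_inverseLaplace {l : ℂ} (hl : 0 < l.re) :
    HasLaplace (inverseLaplace G) l (G l) := by
  have h := intervalIntegral_tendsto_integral_Ioi 0
    (integrable_exp_mul_inverseLaplace hG hGb hl).integrableOn tendsto_id
  rw [setIntegral_eq_integral_of_forall_compl_eq_zero fun t ht => by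
      rw [inverseLaplace_eq_zero_of_nonpos hG hGb (not_lt.1 ht), mul_zero],
    integral_exp_mul_inverseLaplace hG hGb hl] at h
  refine h.congr' ((eventually_ge_atTop 0).mono fun T hT => ?_)
  rw [id, intervalIntegral.integral_of_le hT, lapPartial]

end InverseLaplace

lemma laplaceAbs_le_of_forall_hasLaplace {f : ℝ → ℂ} {ω : ℝ}
    (h : ∀ l : ℂ, ω < l.re → ∃ F, HasLaplace f l F) : laplaceAbs f ≤ ω :=
  sInf_le ⟨ω, rfl, h⟩

lemma hasLaplace_zero_of_ae_eq_zero {f : ℝ → ℂ} (hf : ∀ᵐ t : ℝ, 0 ≤ t → f t = 0) (l : ℂ) :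
    HasLaplace f l 0 := by
  have : lapPartial f l = fun _ => 0 := funext fun T => integral_eq_zero_of_ae <| by
    filter_upwards [ae_restrict_of_ae hf, ae_restrict_mem measurableSet_Ioc] with t ht hmem
    simp [ht hmem.1.le]
  rw [HasLaplace, this]
  exact tendsto_const_nhds

lemma not_isUniquenessSeq_of_vanishing {lam : ℕ → ℂ} {G : ℂ → ℂ} (hlam : ∀ k, 0 < (lam k).re)
    (hG : DifferentiableOn ℂ G {z | 0 < z.re})
    (hGb : ∀ z : ℂ, 0 < z.re → ‖G z‖ ≤ (1 + z.im ^ 2)⁻¹)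
    (hGlam : ∀ k, G (lam k) = 0) {z₀ : ℂ} (hz₀ : 0 < z₀.re) (hGz₀ : G z₀ ≠ 0) :
    ¬ IsUniquenessSeq lam := by
  intro hU
  have hf {l : ℂ} (hl : 0 < l.re) := hasLaplace_inverseLaplace hG hGb hl
  have hzero := hU (inverseLaplace G)
    ((continuous_inverseLaplace hG hGb).locallyIntegrable.locallyIntegrableOn _)
    (fun k => (laplaceAbs_le_of_forall_hasLaplace fun l hl => ⟨_, hf hl⟩).trans_lt
      (mod_cast hlam k))
    (fun k => hGlam k ▸ hf (hlam k))
  exact hGz₀ (tendsto_nhds_unique (hf hz₀) (hasLaplace_zero_of_ae_eq_zero hzero z₀))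

theorem stmt1_general (lam : ℕ → ℂ)
    (δ : ℝ) (hδ : 0 < δ) (hre : ∀ k, δ ≤ (lam k).re)
    (hsum : Summable (fun k => 1 - ‖(lam k - 1) / (lam k + 1)‖))
    (θ : ℝ) (hθ : θ ∈ Set.Ioo 0 (Real.pi / 2))
    (harg : ∀ k, |Complex.arg (lam k)| ≤ θ) :
    ¬ IsUniquenessSeq lam := by
  have hlam (k : ℕ) : 0 < (lam k).re := hδ.trans_le (hre k)
  have hs := summable_inv_re_of_abs_arg_le hδ hre hθ.2 harg hsum
  have hx : 0 < ((δ / 2 : ℝ) : ℂ).re := by simpa using hδ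
  refine not_isUniquenessSeq_of_vanishing hlam (G := fun z => blaschkeProduct lam z / (z + 1) ^ 2)
    ((differentiableOn_blaschkeProduct hlam hs).div (by fun_prop)
      fun z hz => pow_ne_zero 2 (add_one_ne_zero_of_re_nonneg (le_of_lt hz)))
    (fun z hz => norm_div_add_one_sq_le (norm_blaschkeProduct_le_one hlam hs hz.le) hz.le)
    (fun k => by simp [blaschkeProduct_apply_self]) hx ?_
  refine div_ne_zero (blaschkeProduct_ne_zero hlam hs hx.le fun k h => ?_)
    (pow_ne_zero 2 (add_one_ne_zero_of_re_nonneg hx.le))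
  have := congrArg re h
  simp only [ofReal_re] at this
  linarith [hre k]

theorem stmt1 (lam : ℕ → ℂ)
    (hacc : ∀ z : ℂ, ¬ AccPt z (Filter.principal (Set.range lam)))
    (δ : ℝ) (hδ : 0 < δ) (hre : ∀ k, δ ≤ (lam k).re)
    (hsum : Summable (fun k => 1 - ‖(lam k - 1) / (lam k + 1)‖))
    (θ : ℝ) (hθ : θ ∈ Set.Ioo 0 (Real.pi / 2))
    (harg : ∀ k, |Complex.arg (lam k)| ≤ θ) :
    ¬ IsUniquenessSeq lam :=
  stmt1_general lam δ hδ hre hsum θ hθ harg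
end
end

section
/- Let n ∈ ℕ, let (z_1,…,z_n) ∈ ℂ^n, and let ((λ_k^1,…,λ_k^n))_{k∈ℕ} be a sequence in ℂ^n. Then ((λ_k^1,…,λ_k^n))_{k∈ℕ} is a uniqueness sequence for the n-dimensional Laplace transform if and only if ((λ_k^1 + z_1,…,λ_k^n + z_n))_{k∈ℕ} is a uniqueness sequence for the n-dimensional Laplace transform. -/
open MeasureTheory Filter Set

noncomputable section

lemma quad_closed (n : ℕ) : IsClosed {t : Fin n → ℝ | ∀ i, 0 ≤ t i} := by
  have h : {t : Fin n → ℝ | ∀ i, 0 ≤ t i} = ⋂ i, {t | 0 ≤ t i} := by ext t; simp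
  rw [h]
  exact isClosed_iInter fun i => isClosed_le continuous_const (continuous_apply i)

lemma lap_shift (n : ℕ) (f : (Fin n → ℝ) → ℂ) (z l : Fin n → ℂ) :
    mLapPartial n (fun s => Complex.exp (-(∑ i, z i * (s i))) * f s) l
      = mLapPartial n f (fun i => l i + z i) := by
  funext t
  unfold mLapPartial
  congr 1
  funext s
  rw [← mul_assoc, ← Complex.exp_add]
  congr 2
  rw [← neg_add, ← Finset.sum_add_distrib]
  congr 1
  exact Finset.sum_congr rfl fun i _ => (add_mul _ _ _).symm

lemma ereal_shift_iff {a : EReal} (ha : a ≠ ⊤) (b c : ℝ) :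
    a + ((-c : ℝ) : EReal) < (b : EReal) ↔ a < ((b + c : ℝ) : EReal) := by
  induction a using EReal.rec with
  | bot => simp [EReal.bot_add, EReal.bot_lt_coe]
  | coe r =>
      rw [← EReal.coe_add, EReal.coe_lt_coe_iff, EReal.coe_lt_coe_iff]
      constructor <;> intro <;> linarith
  | top => simp at ha

lemma key (n : ℕ) (z : Fin n → ℂ) (lam : ℕ → Fin n → ℂ)
    (H : IsMUniquenessFamily n lam) :
    IsMUniquenessFamily n (fun k j => lam k j + z j) := by
  intro f hloc ⟨ω, hωtop, hsub, hωlam⟩ h0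
  set g : (Fin n → ℝ) → ℂ := fun s => Complex.exp (-(∑ i, z i * (s i))) * f s with hg
  have hgloc : MeasureTheory.LocallyIntegrableOn g {t | ∀ i, 0 ≤ t i} := by
    exact hloc.continuousOn_mul (Continuous.continuousOn (by fun_prop))
      (quad_closed n).isLocallyClosed
  have hshift : ∀ l : Fin n → ℂ, mLapPartial n g l = mLapPartial n f (fun i => l i + z i) :=
    fun l => lap_shift n f z l
  have hregion : ∃ ω' : Fin n → EReal, (∀ j, ω' j ≠ ⊤) ∧
      {l : Fin n → ℂ | ∀ j, ω' j < (((l j).re : ℝ) : EReal)} ⊆ mOmegaB n g ∩ mOmega n g ∧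
      ∀ k j, ω' j < ((((lam k j).re : ℝ)) : EReal) := by
    refine ⟨fun j => ω j + ((-(z j).re : ℝ) : EReal), ?_, ?_, ?_⟩
    · intro j
      exact (EReal.add_lt_top (hωtop j) (EReal.coe_ne_top _)).ne
    · intro l hl
      have hmem : (fun j => l j + z j) ∈ mOmegaB n f ∩ mOmega n f := by
        apply hsub
        intro j
        have := (ereal_shift_iff (hωtop j) (l j).re (z j).re).mp (hl j)
        simpa [Complex.add_re] using this
      constructor
      · show Bornology.IsBounded (mLapPartial n g l '' _)
        rw [hshift l]
        exact hmem.1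
      · obtain ⟨F, hF⟩ := hmem.2
        exact ⟨F, by unfold HasMLaplace; rw [hshift l]; exact hF⟩
    · intro k j
      rw [ereal_shift_iff (hωtop j)]
      have := hωlam k j
      simpa [Complex.add_re] using this
  have hg0 : ∀ k, HasMLaplace n g (lam k) 0 := by
    intro k
    unfold HasMLaplace
    rw [hshift (lam k)]
    exact h0 k
  have := H g hgloc hregion hg0
  filter_upwards [this] with t ht hti
  have h := ht hti
  rw [hg] at h
  exact (mul_eq_zero.mp h).resolve_left (Complex.exp_ne_zero _)

theorem stmt3 (n : ℕ) (z : Fin n → ℂ) (lam : ℕ → Fin n → ℂ) :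
    IsMUniquenessFamily n lam ↔ IsMUniquenessFamily n (fun k j => lam k j + z j) := by
  constructor
  · exact key n z lam
  · intro h
    have := key n (fun j => -z j) (fun k j => lam k j + z j) h
    simpa using this

end
end

section
/- Let n ∈ ℕ and let a_i > 0 and b_i > 0 for 1 ≤ i ≤ n. For each multi-index k = (k_1,…,k_n) ∈ ℕ_0^n define e_k : [0,∞)^n → ℂ by e_k(t_1,…,t_n) := exp(−(a_1 + k_1 b_1)t_1 − ⋯ − (a_n + k_n b_n)t_n). Then the closed linear span of the set {e_k : k ∈ ℕ_0^n} equals all of L^1([0,∞)^n), i.e., this set is total in L^1([0,∞)^n). -/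
open MeasureTheory Filter Set

noncomputable section

/-!
Substituting `xᵢ = exp (-bᵢ tᵢ)` maps `[0,∞)ⁿ` homeomorphically onto `(0,1]ⁿ` and turns `e_k` into
the monomial `x^k` times the fixed weight `e_0`. Hence `H ↦ (H ∘ ψ) * e_0` is a bounded operator
`C([0,1]ⁿ, ℂ) → L¹([0,∞)ⁿ)` sending the monomials to the `e_k`. The monomials span a dense subspace
of `C([0,1]ⁿ, ℂ)` by Stone–Weierstrass, and the operator has dense range: a compactly supported
continuous `g` is the image of `(g / e_0) ∘ ψ⁻¹` extended by zero, which is continuous because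
`g` vanishes for large `t`. A bounded operator with dense range maps dense subspaces to dense
subspaces.
-/

section WeightedComposition

variable {α X : Type*} [MeasurableSpace α] [TopologicalSpace α] [OpensMeasurableSpace α]
  [TopologicalSpace X] [CompactSpace X] {μ : Measure α} {w : α → ℂ}

lemma integrable_continuousMap_comp_mul (hw : Integrable w μ) (ψ : C(α, X)) (H : C(X, ℂ)) :
    Integrable (fun t => H (ψ t) * w t) μ :=
  hw.bdd_mul (H.comp ψ).continuous.aestronglyMeasurable
    (Eventually.of_forall fun t => H.norm_coe_le_norm (ψ t))

def weightedComp (hw : Integrable w μ) (ψ : C(α, X)) : C(X, ℂ) →L[ℂ] Lp ℂ 1 μ :=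
  LinearMap.mkContinuous
    { toFun := fun H => (integrable_continuousMap_comp_mul hw ψ H).toL1 _
      map_add' := fun H₁ H₂ => by
        rw [← Integrable.toL1_add, Integrable.toL1_eq_toL1_iff]
        exact Eventually.of_forall fun t => add_mul _ _ _
      map_smul' := fun c H => by
        rw [RingHom.id_apply, ← Integrable.toL1_smul, Integrable.toL1_eq_toL1_iff]
        exact Eventually.of_forall fun t => mul_assoc _ _ _ }
    (∫ t, ‖w t‖ ∂μ) fun H => by
      simp only [LinearMap.coe_mk, AddHom.coe_mk, L1.norm_eq_integral_norm]
      rw [integral_congr_ae ((Integrable.coeFn_toL1 _).mono fun t ht => by rw [ht]),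
        ← integral_mul_const]
      refine integral_mono_of_nonneg (Eventually.of_forall fun t => norm_nonneg _)
        (hw.norm.mul_const _) (Eventually.of_forall fun t => ?_)
      simp only [norm_mul, mul_comm (‖w t‖)]
      exact mul_le_mul_of_nonneg_right (H.norm_coe_le_norm (ψ t)) (norm_nonneg (w t))

lemma weightedComp_ae_eq (hw : Integrable w μ) (ψ : C(α, X)) (H : C(X, ℂ)) :
    weightedComp hw ψ H =ᵐ[μ] fun t => H (ψ t) * w t :=
  Integrable.coeFn_toL1 (integrable_continuousMap_comp_mul hw ψ H)

end WeightedComposition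

lemma MeasureTheory.Lp.denseRange_of_hasCompactSupport_mem_range {α E F : Type*}
    [TopologicalSpace α] [NormalSpace α] [R1Space α] [WeaklyLocallyCompactSpace α]
    [MeasurableSpace α] [BorelSpace α] [NormedAddCommGroup E] [NormedSpace ℝ E]
    {μ : Measure α} [μ.Regular] {p : ENNReal} [Fact (1 ≤ p)] (hp : p ≠ ⊤) {T : F → Lp E p μ}
    (hT : ∀ g : α → E, Continuous g → HasCompactSupport g → ∀ hg : MemLp g p μ,
      hg.toLp g ∈ range T) :
    DenseRange T := by
  refine fun f => EMetric.mem_closure_iff.2 fun ε hε => ?_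
  obtain ⟨δ, hδ, hδε⟩ := exists_between hε
  obtain ⟨g, hg_supp, hfg, hg_cont, hg⟩ :=
    (Lp.memLp f).exists_hasCompactSupport_eLpNorm_sub_le hp hδ.ne'
  refine ⟨hg.toLp g, hT g hg_cont hg_supp hg, ?_⟩
  rw [Lp.edist_def, eLpNorm_congr_ae ((EventuallyEq.refl _ _).sub hg.coeFn_toLp)]
  exact hfg.trans_lt hδε

section Monomials

variable {ι : Type*} (K : Set (ι → ℝ))

def coordinateMap (i : ι) : C(K, ℂ) :=
  ⟨fun x => (x.1 i : ℂ),
    Complex.continuous_ofReal.comp ((continuous_apply i).comp continuous_subtype_val)⟩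

lemma star_range_coordinateMap_subset :
    star (range (coordinateMap K)) ⊆ range (coordinateMap K) := by
  rintro f ⟨i, hi⟩
  refine ⟨i, ?_⟩
  ext x
  simpa [coordinateMap] using congrArg (fun g : C(K, ℂ) => star (g x)) hi

variable [Fintype ι]

def monomialMap (k : ι → ℕ) : C(K, ℂ) := ∏ i, coordinateMap K i ^ k i

lemma monomialMap_apply (k : ι → ℕ) (x : K) : monomialMap K k x = ∏ i, (x.1 i : ℂ) ^ k i := by
  simp [monomialMap, coordinateMap]

lemma submonoidClosure_range_coordinateMap_subset :
    (Submonoid.closure (range (coordinateMap K)) : Set C(K, ℂ)) ⊆ range (monomialMap K) := by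
  intro f hf
  obtain ⟨k, rfl⟩ := Submonoid.mem_closure_range_iff.1 hf
  exact ⟨k, (Finsupp.prod_fintype _ _ fun i => pow_zero _).symm⟩

lemma starAlgebraAdjoin_coordinateMap_le_span :
    Subalgebra.toSubmodule (StarAlgebra.adjoin ℂ (range (coordinateMap K))).toSubalgebra ≤
      Submodule.span ℂ (range (monomialMap K)) := by
  rw [StarAlgebra.adjoin_eq_span, union_eq_left.2 (star_range_coordinateMap_subset K)]
  exact Submodule.span_mono (submonoidClosure_range_coordinateMap_subset K)

lemma topologicalClosure_span_monomialMap [CompactSpace K] :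
    (Submodule.span ℂ (range (monomialMap K))).topologicalClosure = ⊤ := by
  set A := StarAlgebra.adjoin ℂ (range (coordinateMap K))
  have hsep : A.SeparatesPoints := by
    intro x y hxy
    obtain ⟨i, hi⟩ : ∃ i, x.1 i ≠ y.1 i := by
      by_contra! h
      exact hxy (Subtype.ext (funext h))
    exact ⟨_, ⟨coordinateMap K i, StarAlgebra.subset_adjoin ℂ _ (mem_range_self i), rfl⟩,
      by simpa [coordinateMap] using hi⟩
  have hA := ContinuousMap.starSubalgebra_topologicalClosure_eq_top_of_separatesPoints A hsep
  refine eq_top_iff.2 fun f _ => ?_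
  have hf : f ∈ closure (A : Set C(K, ℂ)) := by
    rw [← StarSubalgebra.topologicalClosure_coe, hA]; trivial
  exact closure_mono (starAlgebraAdjoin_coordinateMap_le_span K) hf

end Monomials

section LogPullback

variable {ι : Type*}

def logPullback (b : ι → ℝ) (φ : (ι → ℝ) → ℂ) : (ι → ℝ) → ℂ :=
  {x | ∀ i, 0 < x i}.indicator fun x => φ fun i => -Real.log (x i) / b i

lemma logPullback_exp {b : ι → ℝ} (hb : ∀ i, b i ≠ 0) (φ : (ι → ℝ) → ℂ) (t : ι → ℝ) :
    logPullback b φ (fun i => Real.exp (-(b i * t i))) = φ t := by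
  rw [logPullback,
    indicator_of_mem (show _ ∈ {x : ι → ℝ | ∀ i, 0 < x i} from fun i => Real.exp_pos _)]
  congr 1
  funext i
  rw [Real.log_exp, neg_neg, mul_div_cancel_left₀ _ (hb i)]

lemma continuous_logPullback [Fintype ι] {b : ι → ℝ} (hb : ∀ i, 0 < b i) {φ : (ι → ℝ) → ℂ}
    (hφ : Continuous φ) (hφs : HasCompactSupport φ) : Continuous (logPullback b φ) := by
  obtain ⟨R, hR⟩ := hφs.isCompact.isBounded.subset_closedBall 0
  have hsupp : tsupport (logPullback b φ) ⊆ {x | ∀ i, Real.exp (-(b i * R)) ≤ x i} := by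
    refine closure_minimal (fun x hx => ?_) ?_
    · have hxU : x ∈ {x : ι → ℝ | ∀ i, 0 < x i} := by
        by_contra h
        exact hx (indicator_of_notMem h _)
      rw [logPullback, Function.mem_support, indicator_of_mem hxU] at hx
      have hτR := mem_closedBall_zero_iff.1 (hR (subset_tsupport _ hx))
      intro i
      have hlog : -Real.log (x i) / b i ≤ R :=
        (Real.le_norm_self _).trans ((norm_le_pi_norm _ i).trans hτR)
      rw [div_le_iff₀ (hb i)] at hlog
      rw [← Real.exp_log (hxU i)]
      exact Real.exp_le_exp.2 (by linarith)
    · simp only [ofPred_forall]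
      exact isClosed_iInter fun i => isClosed_le continuous_const (continuous_apply i)
  refine continuous_of_tsupport fun x hx => ?_
  have hpos : ∀ i, 0 < x i := fun i => (Real.exp_pos _).trans_le (hsupp hx i)
  have hU : IsOpen {x : ι → ℝ | ∀ i, 0 < x i} := by
    simp only [ofPred_forall]
    exact isOpen_iInter_of_finite fun i => isOpen_lt continuous_const (continuous_apply i)
  have hτ : ContinuousAt (fun x : ι → ℝ => fun i => -Real.log (x i) / b i) x :=
    continuousAt_pi.2 fun i =>
      ((Real.continuousAt_log (hpos i).ne').comp (f := fun p : ι → ℝ => p i)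
        (continuous_apply i).continuousAt).neg.div_const _
  exact (hφ.continuousAt.comp hτ).congr <|
    eventually_of_mem (hU.mem_nhds hpos) fun y hy => (indicator_of_mem hy _).symm

end LogPullback

section ExpSubstitution

variable {ι : Type*}

-- Clamped at `tᵢ = 0` so that it is defined on all of `ℝⁿ`; only its values on `[0,∞)ⁿ` matter.
def expSubst {b : ι → ℝ} (hb : ∀ i, 0 ≤ b i) : C(ι → ℝ, Icc (0 : ι → ℝ) 1) where
  toFun t := ⟨fun i => Real.exp (-(b i * max (t i) 0)), fun i => (Real.exp_pos _).le,
    fun i => Real.exp_le_one_iff.2 (neg_nonpos.2 (mul_nonneg (hb i) (le_max_right _ _)))⟩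
  continuous_toFun := by fun_prop

lemma expSubst_apply_of_nonneg {b : ι → ℝ} (hb : ∀ i, 0 ≤ b i) {t : ι → ℝ}
    (ht : ∀ i, 0 ≤ t i) :
    (expSubst hb t : ι → ℝ) = fun i => Real.exp (-(b i * t i)) := by
  funext i
  simp [expSubst, max_eq_left (ht i)]

lemma integrable_exp_neg_sum_mul [Fintype ι] {a : ι → ℝ} (ha : ∀ i, 0 < a i) :
    Integrable (fun t : ι → ℝ => Complex.exp (-∑ i, (a i : ℂ) * (t i : ℂ)))
      (volume.restrict {t | ∀ i, 0 ≤ t i}) := by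
  have hQ : {t : ι → ℝ | ∀ i, 0 ≤ t i} = univ.pi fun _ => Ici 0 := by ext; simp [Pi.le_def]
  rw [hQ, volume_pi, Measure.restrict_pi_pi]
  simp only [← Finset.sum_neg_distrib, Complex.exp_sum]
  refine Integrable.fintype_prod
    (f := fun i (x : ℝ) => Complex.exp (-((a i : ℂ) * x))) fun i => ?_
  rw [← IntegrableOn, integrableOn_Ici_iff_integrableOn_Ioi]
  simpa [neg_mul] using
    integrableOn_exp_mul_complex_Ioi (a := -(a i : ℂ)) (by simpa using ha i) 0

lemma exists_continuousMap_comp_expSubst_eq [Fintype ι] {b : ι → ℝ} (hb : ∀ i, 0 < b i)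
    {φ : (ι → ℝ) → ℂ} (hφ : Continuous φ) (hφs : HasCompactSupport φ) :
    ∃ H : C(Icc (0 : ι → ℝ) 1, ℂ),
      ∀ t, (∀ i, 0 ≤ t i) → H (expSubst (fun i => (hb i).le) t) = φ t :=
  ⟨⟨fun x => logPullback b φ x, (continuous_logPullback hb hφ hφs).comp continuous_subtype_val⟩,
    fun t ht => by
      simp only [ContinuousMap.coe_mk, expSubst_apply_of_nonneg _ ht,
        logPullback_exp (fun i => (hb i).ne') φ]⟩

lemma monomialMap_expSubst_mul_exp [Fintype ι] (a : ι → ℝ) {b : ι → ℝ} (hb : ∀ i, 0 ≤ b i)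
    (k : ι → ℕ) {t : ι → ℝ} (ht : ∀ i, 0 ≤ t i) :
    monomialMap (Icc (0 : ι → ℝ) 1) k (expSubst hb t) *
        Complex.exp (-∑ i, (a i : ℂ) * (t i : ℂ)) =
      Complex.exp (-(∑ i, (((a i + (k i : ℝ) * b i : ℝ)) : ℂ) * ((t i : ℝ) : ℂ))) := by
  rw [monomialMap_apply, expSubst_apply_of_nonneg hb ht]
  simp only [Complex.ofReal_exp, ← Complex.exp_nat_mul, ← Complex.exp_sum, ← Complex.exp_add]
  congr 1
  push_cast
  simp only [← Finset.sum_neg_distrib, ← Finset.sum_add_distrib]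
  exact Finset.sum_congr rfl fun i _ => by ring

lemma mem_range_weightedComp_expSubst [Fintype ι] {a b : ι → ℝ} (ha : ∀ i, 0 < a i)
    (hb : ∀ i, 0 < b i) {g : (ι → ℝ) → ℂ} (hg : Continuous g) (hgs : HasCompactSupport g)
    (hgm : MemLp g 1 (volume.restrict {t | ∀ i, 0 ≤ t i})) :
    hgm.toLp g ∈ range (weightedComp (integrable_exp_neg_sum_mul ha)
      (expSubst fun i => (hb i).le)) := by
  obtain ⟨H, hH⟩ := exists_continuousMap_comp_expSubst_eq hb
    (φ := fun t => g t * Complex.exp (∑ i, (a i : ℂ) * (t i : ℂ))) (by fun_prop) hgs.mul_right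
  refine ⟨H, Lp.ext ?_⟩
  filter_upwards [weightedComp_ae_eq (integrable_exp_neg_sum_mul ha) _ H, hgm.coeFn_toLp,
    ae_restrict_mem (by measurability)] with t h1 h2 ht
  rw [h1, h2, hH t ht, mul_assoc, ← Complex.exp_add, add_neg_cancel, Complex.exp_zero, mul_one]

end ExpSubstitution

theorem stmt4 (n : ℕ) (a b : Fin n → ℝ) (ha : ∀ i, 0 < a i) (hb : ∀ i, 0 < b i)
    (E : (Fin n → ℕ) → MeasureTheory.Lp ℂ 1
      (MeasureTheory.volume.restrict {t : Fin n → ℝ | ∀ i, 0 ≤ t i}))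
    (hE : ∀ k : Fin n → ℕ, (E k : (Fin n → ℝ) → ℂ)
        =ᵐ[MeasureTheory.volume.restrict {t : Fin n → ℝ | ∀ i, 0 ≤ t i}]
      fun t => Complex.exp (-(∑ i, (((a i + (k i : ℝ) * b i : ℝ)) : ℂ) * ((t i : ℝ) : ℂ)))) :
    (Submodule.span ℂ (Set.range E)).topologicalClosure = ⊤ := by
  set T := weightedComp (integrable_exp_neg_sum_mul ha) (expSubst fun i => (hb i).le)
  have hTE : ∀ k, T (monomialMap (Icc 0 1) k) = E k := fun k => Lp.ext <| by
    filter_upwards [weightedComp_ae_eq _ _ (monomialMap (Icc 0 1) k), hE k,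
      ae_restrict_mem (by measurability)] with t hTk hEk ht
    rw [hTk, hEk, monomialMap_expSubst_mul_exp a _ k ht]
  have hT : DenseRange T := Lp.denseRange_of_hasCompactSupport_mem_range ENNReal.one_ne_top
    fun g hg hgs hgm => mem_range_weightedComp_expSubst ha hb hg hgs hgm
  have := hT.topologicalClosure_map_submodule (topologicalClosure_span_monomialMap _)
  rwa [Submodule.map_span, ← range_comp,
    show ⇑(T : C(Icc (0 : Fin n → ℝ) 1, ℂ) →ₗ[ℂ] _) ∘ monomialMap _ = E from funext hTE] at this

end
end

section
/- Let n ∈ ℕ, let ((λ_k^1,…,λ_k^n))_{k∈ℕ} be a sequence in ℂ^n with Re λ_k^j > 0 for all k ∈ ℕ and j = 1,…,n, and let 1 ≤ s ≤ n and 1 ≤ j_1 < ⋯ < j_s ≤ n. If ((λ_k^1,…,λ_k^n))_{k∈ℕ} is a uniqueness sequence for the n-dimensional Laplace transform, then ((λ_k^{j_1},…,λ_k^{j_s}))_{k∈ℕ} is a uniqueness sequence for the s-dimensional Laplace transform. -/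
/-! Extend `f` to `[0,∞)ⁿ` by the indicator of `(0,1]` in each coordinate outside the range of `J`.
The partial Laplace integrals of the extension factor into those of `f` times those of the
indicator, which are bounded and eventually constant for every `λ ∈ ℂ`. So the extension satisfies
the hypotheses of uniqueness in dimension `n`, with abscissa `-∞` in the new coordinates, and its
transform vanishes along the whole sequence. Hence the extension vanishes almost everywhere, and
since the indicator is nonzero on a cube of positive measure, so does `f`. -/

open MeasureTheory Filter Set

noncomputable section

theorem Filter.tendsto_atTop_pi_iff {α ι β : Type*} [Finite ι] [Preorder β] {f : α → ι → β}
    {l : Filter α} : Tendsto f l atTop ↔ ∀ i, Tendsto (fun a => f a i) l atTop := by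
  simp only [tendsto_atTop, Pi.le_def, eventually_all]
  exact ⟨fun h i b => h (fun _ => b) i, fun h b i => h i (b i)⟩

theorem ae_eq_zero_of_ae_prod_mul_eq_zero {α β M₀ : Type*} [MeasurableSpace α]
    [MeasurableSpace β] [MulZeroClass M₀] [NoZeroDivisors M₀] {μ : Measure α} {ν : Measure β}
    [SFinite ν] {f : α → M₀} {h : β → M₀} {S : Set α} {T : Set β}
    (hh : ¬ ∀ᵐ y ∂ν, y ∈ T → h y = 0)
    (H : ∀ᵐ z ∂μ.prod ν, z.1 ∈ S → z.2 ∈ T → f z.1 * h z.2 = 0) :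
    ∀ᵐ x ∂μ, x ∈ S → f x = 0 := by
  filter_upwards [Measure.ae_ae_of_ae_prod H] with x hx hxS
  by_contra hfx
  exact hh (hx.mono fun y hy hyT => (mul_eq_zero.1 (hy hxS hyT)).resolve_left hfx)

def unitPulse : ℝ → ℂ := (Ioc 0 1).indicator 1

theorem integrable_unitPulse : Integrable unitPulse :=
  (integrable_indicator_iff measurableSet_Ioc).2 (integrableOn_const measure_Ioc_lt_top.ne)

theorem lapPartial_unitPulse (l : ℂ) (T : ℝ) :
    lapPartial unitPulse l T = ∫ u in Ioc 0 (min T 1), Complex.exp (-(l * u)) := by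
  have hint : ∀ u : ℝ, Complex.exp (-(l * u)) * unitPulse u
      = (Ioc 0 1).indicator (fun u : ℝ => Complex.exp (-(l * u))) u := fun u => by
    simp [unitPulse, indicator_apply]
  simp_rw [lapPartial, hint, setIntegral_indicator measurableSet_Ioc, Ioc_inter_Ioc, max_self]

theorem hasLaplace_unitPulse (l : ℂ) : HasLaplace unitPulse l (lapPartial unitPulse l 1) :=
  tendsto_const_nhds.congr' <| (eventually_ge_atTop 1).mono fun T hT => by
    rw [lapPartial_unitPulse, lapPartial_unitPulse, min_self, min_eq_right hT]

theorem norm_lapPartial_unitPulse_le (l : ℂ) (T : ℝ) :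
    ‖lapPartial unitPulse l T‖ ≤ ∫ u in Ioc (0 : ℝ) 1, ‖Complex.exp (-(l * u))‖ := by
  rw [lapPartial_unitPulse]
  refine (norm_integral_le_integral_norm _).trans <| setIntegral_mono_set ?_ ?_ ?_
  · exact (by fun_prop : Continuous fun u : ℝ => ‖Complex.exp (-(l * u))‖).integrableOn_Ioc
  · exact Eventually.of_forall fun _ => norm_nonneg _
  · exact (Ioc_subset_Ioc_right (min_le_right T 1)).eventuallyLE

theorem not_ae_prod_unitPulse_eq_zero (κ : Type*) [Fintype κ] :
    ¬ ∀ᵐ z : κ → ℝ, z ∈ {z | ∀ i, 0 ≤ z i} → ∏ i, unitPulse (z i) = 0 := by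
  intro h
  have hcube : volume (univ.pi fun _ : κ => Ioc (0 : ℝ) 1) = 0 := by
    refine measure_mono_null (fun z hz => ?_) (ae_iff.1 h)
    have hz' : ∀ i, z i ∈ Ioc 0 1 := fun i => hz i (mem_univ i)
    simp [unitPulse, hz', (hz' _).1.le]
  simp [volume_pi_pi] at hcube

section PulseExtension

variable {s n : ℕ} {κ : Type*} [Fintype κ] (σ : Fin s ⊕ κ ≃ Fin n)

def splitCoords : (Fin n → ℝ) ≃ᵐ (Fin s → ℝ) × (κ → ℝ) :=
  (MeasurableEquiv.piCongrLeft (fun _ => ℝ) σ).symm.trans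
    (MeasurableEquiv.sumPiEquivProdPi fun _ => ℝ)

omit [Fintype κ] in
theorem splitCoords_apply (x : Fin n → ℝ) :
    splitCoords σ x = (fun j => x (σ (.inl j)), fun i => x (σ (.inr i))) := rfl

theorem measurePreserving_splitCoords : MeasurePreserving (splitCoords σ) :=
  (volume_measurePreserving_piCongrLeft _ σ).symm.trans
    (volume_measurePreserving_sumPiEquivProdPi_symm _).symm

omit [Fintype κ] in
theorem continuous_splitCoords : Continuous (splitCoords σ) := by
  simp only [funext (splitCoords_apply σ)]
  fun_prop

omit [Fintype κ] in
theorem forall_iff_forall_splitCoords {P : Fin n → Prop} :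
    (∀ i, P i) ↔ (∀ j, P (σ (.inl j))) ∧ ∀ i, P (σ (.inr i)) :=
  σ.forall_congr_right.symm.trans Sum.forall

def pulseExtension (f : (Fin s → ℝ) → ℂ) (x : Fin n → ℝ) : ℂ :=
  f (splitCoords σ x).1 * ∏ i, unitPulse ((splitCoords σ x).2 i)

theorem mLapPartial_pulseExtension (f : (Fin s → ℝ) → ℂ) (l : Fin n → ℂ) (t : Fin n → ℝ) :
    mLapPartial n (pulseExtension σ f) l t
      = mLapPartial s f (fun j => l (σ (.inl j))) (fun j => t (σ (.inl j)))
        * ∏ i, lapPartial unitPulse (l (σ (.inr i))) (t (σ (.inr i))) := by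
  set F : (Fin s → ℝ) → ℂ := fun y => Complex.exp (-∑ j, l (σ (.inl j)) * y j) * f y
  set G : (κ → ℝ) → ℂ := fun z => ∏ i, Complex.exp (-(l (σ (.inr i)) * z i)) * unitPulse (z i)
  have hbox : (univ.pi fun i => Ioc (0 : ℝ) (t i)) = splitCoords σ ⁻¹'
      ((univ.pi fun j => Ioc 0 (t (σ (.inl j)))) ×ˢ univ.pi fun i => Ioc 0 (t (σ (.inr i)))) := by
    ext x
    simp only [Set.mem_pi, mem_univ, true_implies, mem_preimage, mem_prod, splitCoords_apply]
    exact forall_iff_forall_splitCoords σ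
  have hintegrand (x : Fin n → ℝ) : Complex.exp (-∑ i, l i * x i) * pulseExtension σ f x
      = F (splitCoords σ x).1 * G (splitCoords σ x).2 := by
    rw [pulseExtension, ← σ.sum_comp, Fintype.sum_sum_type, neg_add, Complex.exp_add]
    simp only [F, G, Finset.prod_mul_distrib, ← Complex.exp_sum, Finset.sum_neg_distrib,
      splitCoords_apply]
    ring
  rw [mLapPartial, hbox]
  simp_rw [hintegrand]
  rw [(measurePreserving_splitCoords σ).setIntegral_preimage_emb
      (MeasurableEquiv.measurableEmbedding _) (fun z => F z.1 * G z.2),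
    Measure.volume_eq_prod, setIntegral_prod_mul]
  congr 1
  rw [volume_pi, Measure.restrict_pi_pi]
  exact integral_fintype_prod_eq_prod fun i (u : ℝ) =>
    Complex.exp (-(l (σ (.inr i)) * u)) * unitPulse u

theorem hasMLaplace_pulseExtension {f : (Fin s → ℝ) → ℂ} {l : Fin n → ℂ} {F : ℂ}
    (hf : HasMLaplace s f (fun j => l (σ (.inl j))) F) :
    HasMLaplace n (pulseExtension σ f) l
      (F * ∏ i, lapPartial unitPulse (l (σ (.inr i))) 1) := by
  have hcoord := tendsto_atTop_pi_iff.1 (tendsto_id (x := (atTop : Filter (Fin n → ℝ))))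
  simp_rw [HasMLaplace, funext (mLapPartial_pulseExtension σ f l)]
  refine (hf.comp (tendsto_atTop_pi_iff.2 fun j => hcoord _)).mul <|
    tendsto_finsetProd _ fun i _ => (hasLaplace_unitPulse _).comp (hcoord _)

theorem isBounded_mLapPartial_pulseExtension {f : (Fin s → ℝ) → ℂ} {l : Fin n → ℂ}
    (hf : Bornology.IsBounded
      (mLapPartial s f (fun j => l (σ (.inl j))) '' {t | ∀ j, 0 ≤ t j})) :
    Bornology.IsBounded (mLapPartial n (pulseExtension σ f) l '' {t | ∀ i, 0 ≤ t i}) := by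
  obtain ⟨C, hC⟩ := isBounded_iff_forall_norm_le.1 hf
  refine isBounded_iff_forall_norm_le.2
    ⟨C * ∏ i, ∫ u in Ioc (0 : ℝ) 1, ‖Complex.exp (-(l (σ (.inr i)) * u))‖, ?_⟩
  rintro _ ⟨t, ht, rfl⟩
  have hft := hC _ ⟨fun j => t (σ (.inl j)), fun j => ht _, rfl⟩
  rw [mLapPartial_pulseExtension, norm_mul, norm_prod]
  gcongr with i
  · exact (norm_nonneg _).trans hft
  · exact norm_lapPartial_unitPulse_le _ _

theorem locallyIntegrableOn_pulseExtension {f : (Fin s → ℝ) → ℂ}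
    (hf : LocallyIntegrableOn f {t | ∀ j, 0 ≤ t j}) :
    LocallyIntegrableOn (pulseExtension σ f) {t | ∀ i, 0 ≤ t i} := by
  have horthant : IsClosed {t : Fin n → ℝ | ∀ i, 0 ≤ t i} := by
    simpa only [ofPred_forall] using
      isClosed_iInter fun i => isClosed_le continuous_const (continuous_apply i)
  rw [locallyIntegrableOn_iff horthant.isLocallyClosed]
  intro K hK hKc
  set K₁ := (fun x => (splitCoords σ x).1) '' K
  set K₂ := (fun x => (splitCoords σ x).2) '' K
  have hf₁ : IntegrableOn f K₁ :=
    hf.integrableOn_compact_subset (image_subset_iff.2 fun x hx j => hK hx _)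
      (hKc.image (continuous_splitCoords σ).fst)
  have hpulse : Integrable fun z : κ → ℝ => ∏ i, unitPulse (z i) :=
    Integrable.fintype_prod fun _ => integrable_unitPulse
  have hK₁₂ : K ⊆ splitCoords σ ⁻¹' (K₁ ×ˢ K₂) :=
    fun x hx => ⟨mem_image_of_mem _ hx, mem_image_of_mem _ hx⟩
  refine IntegrableOn.mono_set ?_ hK₁₂
  refine ((measurePreserving_splitCoords σ).integrableOn_comp_preimage
    (MeasurableEquiv.measurableEmbedding _)
    (f := fun z => f z.1 * ∏ i, unitPulse (z.2 i))).2 ?_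
  rw [IntegrableOn, Measure.volume_eq_prod, ← Measure.prod_restrict]
  exact hf₁.mul_prod hpulse.integrableOn

theorem ae_eq_zero_of_pulseExtension {f : (Fin s → ℝ) → ℂ}
    (h : ∀ᵐ x : Fin n → ℝ, (∀ i, 0 ≤ x i) → pulseExtension σ f x = 0) :
    ∀ᵐ y : Fin s → ℝ, (∀ j, 0 ≤ y j) → f y = 0 := by
  have hsplit := (measurePreserving_splitCoords σ).symm.quasiMeasurePreserving.ae h
  rw [Measure.volume_eq_prod] at hsplit
  refine ae_eq_zero_of_ae_prod_mul_eq_zero (not_ae_prod_unitPulse_eq_zero κ) ?_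
  filter_upwards [hsplit] with z hz hz₁ hz₂
  obtain ⟨x, rfl⟩ := (splitCoords σ).surjective z
  rw [MeasurableEquiv.symm_apply_apply] at hz
  exact hz ((forall_iff_forall_splitCoords σ).2 ⟨hz₁, hz₂⟩)

theorem IsMUniquenessFamily.comp_inl {K : Type} [Countable K] {lam : K → Fin n → ℂ}
    (huniq : IsMUniquenessFamily n lam) :
    IsMUniquenessFamily s fun k j => lam k (σ (.inl j)) := by
  rintro f hf ⟨ω, hω_ne_top, hω_sub, hω_lam⟩ hf_zero
  refine ae_eq_zero_of_pulseExtension σ <| huniq _ (locallyIntegrableOn_pulseExtension σ hf)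
    ⟨fun i => Sum.elim ω (fun _ => ⊥) (σ.symm i), ?_, ?_, ?_⟩ fun k => ?_
  · refine (forall_iff_forall_splitCoords σ).2 ⟨fun j => ?_, fun i => ?_⟩ <;> simp [hω_ne_top]
  · intro l hl
    have hl' : ∀ j, ω j < ((l (σ (.inl j))).re : EReal) := fun j => by
      simpa using hl (σ (.inl j))
    obtain ⟨hbdd, F, hF⟩ := hω_sub hl'
    exact ⟨isBounded_mLapPartial_pulseExtension σ hbdd, _, hasMLaplace_pulseExtension σ hF⟩
  · exact fun k => (forall_iff_forall_splitCoords σ).2 ⟨fun j => by simpa using hω_lam k j,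
      fun i => by simp⟩
  · simpa using hasMLaplace_pulseExtension σ (hf_zero k)

end PulseExtension

theorem stmt9_general (n s : ℕ) (lam : ℕ → Fin n → ℂ)
    (J : Fin s → Fin n) (hJ : StrictMono J)
    (huniq : IsMUniquenessFamily n lam) :
    IsMUniquenessFamily s (fun k i => lam k (J i)) := by
  classical
  exact huniq.comp_inl <|
    (Equiv.sumCongr (Equiv.ofInjective J hJ.injective) (Equiv.refl _)).trans
      (Equiv.sumCompl (· ∈ range J))

theorem stmt9 (n s : ℕ) (hs : 1 ≤ s) (lam : ℕ → Fin n → ℂ)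
    (hre : ∀ k j, 0 < (lam k j).re)
    (J : Fin s → Fin n) (hJ : StrictMono J)
    (huniq : IsMUniquenessFamily n lam) :
    IsMUniquenessFamily s (fun k i => lam k (J i)) :=
  stmt9_general n s lam J hJ huniq

end
end

section
/- Define f : [0,∞)^2 → ℂ by f(t_1,t_2) := t_1·(t_2^2/2) − (t_1^2/2)·t_2. Then for all λ_1, λ_2 ∈ ℂ with Re λ_1 > 0 and Re λ_2 > 0 the 2-dimensional Laplace transform of f satisfies f̂(λ_1,λ_2) = (λ_1 − λ_2)/(λ_1^3 · λ_2^3). In particular f̂(k,k) = 0 for every k ∈ ℕ while f is not zero almost everywhere, so the sequence ((k,k))_{k∈ℕ} is NOT a uniqueness sequence for the 2-dimensional Laplace transform. -/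
open MeasureTheory Filter Set

noncomputable section

/-! The function is `p₁(t₁) p₂(t₂) - p₂(t₁) p₁(t₂)` with `pₖ(s) = sᵏ / k!`. Partial Laplace integrals
of a product of one-variable functions factor by Fubini, and integration by parts,
`L[g'] = λ L[g] - g(0)`, applied to `pₖ₊₁' = pₖ` gives inductively `L[pₖ](λ) = 1 / λ^(k+1)`
together with bounds on the partial integrals over `[0, t]`.
Hence `f̂(λ₁, λ₂) = 1 / (λ₁² λ₂³) - 1 / (λ₁³ λ₂²)`, which vanishes on the diagonal, although
`f > 0` on the open set `0 < t₁ < t₂`. -/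

lemma lapPartial_deriv {g g' : ℝ → ℂ} (hg : ∀ s, HasDerivAt g (g' s) s) (hg' : Continuous g')
    (l : ℂ) {t : ℝ} (ht : 0 ≤ t) :
    lapPartial g' l t = Complex.exp (-(l * t)) * g t - g 0 + l * lapPartial g l t := by
  have hgc : Continuous g := continuous_iff_continuousAt.2 fun s => (hg s).continuousAt
  have hderiv : ∀ s : ℝ, HasDerivAt (fun s : ℝ => Complex.exp (-(l * s)) * g s)
      (Complex.exp (-(l * s)) * g' s - l * (Complex.exp (-(l * s)) * g s)) s := by
    intro s
    have hexp : HasDerivAt (fun s : ℝ => Complex.exp (-(l * s))) (Complex.exp (-(l * s)) * -l) s := by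
      simpa using ((hasDerivAt_id (s : ℂ)).const_mul l).neg.cexp.comp_ofReal
    exact (hexp.mul (hg s)).congr_deriv (by ring)
  have hint := intervalIntegral.integral_eq_sub_of_hasDerivAt (fun s _ => hderiv s)
    (Continuous.intervalIntegrable (by fun_prop) 0 t)
  rw [intervalIntegral.integral_sub (Continuous.intervalIntegrable (by fun_prop) 0 t)
    (Continuous.intervalIntegrable (by fun_prop) 0 t),
    intervalIntegral.integral_const_mul, intervalIntegral.integral_of_le ht,
    intervalIntegral.integral_of_le ht] at hint
  simp only [Complex.ofReal_zero, mul_zero, neg_zero, Complex.exp_zero, one_mul] at hint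
  simp only [lapPartial]
  linear_combination hint

def powDivFact (k : ℕ) (s : ℝ) : ℂ := (s : ℂ) ^ k / k.factorial

lemma continuous_powDivFact (k : ℕ) : Continuous (powDivFact k) := by
  unfold powDivFact; fun_prop

lemma hasDerivAt_powDivFact_succ (k : ℕ) (s : ℝ) :
    HasDerivAt (powDivFact (k + 1)) (powDivFact k s) s := by
  refine (((hasDerivAt_pow (k + 1) (s : ℂ)).comp_ofReal).div_const _).congr_deriv ?_
  rw [powDivFact, Nat.factorial_succ, Nat.cast_mul, Nat.add_sub_cancel, Nat.cast_succ]
  field_simp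

lemma norm_cexp_mul_powDivFact (l : ℂ) (k : ℕ) {t : ℝ} (ht : 0 ≤ t) :
    ‖Complex.exp (-(l * t)) * powDivFact k t‖ = Real.exp (-(l.re * t)) * (t ^ k / k.factorial) := by
  simp [powDivFact, Complex.norm_exp, abs_of_nonneg ht]

lemma norm_cexp_mul_powDivFact_le {l : ℂ} (hl : 0 < l.re) (k : ℕ) {t : ℝ} (ht : 0 ≤ t) :
    ‖Complex.exp (-(l * t)) * powDivFact k t‖ ≤ 1 / l.re ^ k := by
  have hexp := Real.pow_div_factorial_le_exp (l.re * t) (by positivity) k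
  rw [mul_pow, mul_div_assoc] at hexp
  rw [norm_cexp_mul_powDivFact l k ht, Real.exp_neg, inv_mul_le_iff₀ (Real.exp_pos _), mul_one_div,
    le_div_iff₀ (by positivity), mul_comm]
  exact hexp

lemma tendsto_cexp_mul_powDivFact {l : ℂ} (hl : 0 < l.re) (k : ℕ) :
    Tendsto (fun t : ℝ => Complex.exp (-(l * t)) * powDivFact k t) atTop (nhds 0) := by
  rw [tendsto_zero_iff_norm_tendsto_zero]
  have h := (tendsto_rpow_mul_exp_neg_mul_atTop_nhds_zero k l.re hl).div_const (k.factorial : ℝ)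
  rw [zero_div] at h
  refine h.congr' ?_
  filter_upwards [eventually_ge_atTop 0] with t ht
  rw [norm_cexp_mul_powDivFact l k ht, Real.rpow_natCast]
  ring_nf

lemma lapPartial_powDivFact_zero {l : ℂ} (hl : l ≠ 0) {t : ℝ} (ht : 0 ≤ t) :
    lapPartial (powDivFact 0) l t = (1 - Complex.exp (-(l * t))) / l := by
  have h := lapPartial_deriv (fun s => hasDerivAt_const s (1 : ℂ)) continuous_const l ht
  have hp : powDivFact 0 = fun _ => 1 := by ext; simp [powDivFact]
  rw [hp, eq_div_iff hl]
  simp only [lapPartial, mul_zero, integral_zero, mul_one] at h ⊢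
  linear_combination -h

lemma lapPartial_powDivFact_succ {l : ℂ} (hl : l ≠ 0) (k : ℕ) {t : ℝ} (ht : 0 ≤ t) :
    lapPartial (powDivFact (k + 1)) l t
      = (lapPartial (powDivFact k) l t - Complex.exp (-(l * t)) * powDivFact (k + 1) t) / l := by
  have h := lapPartial_deriv (hasDerivAt_powDivFact_succ k) (continuous_powDivFact k) l ht
  have h0 : powDivFact (k + 1) 0 = 0 := by simp [powDivFact]
  rw [eq_div_iff hl, h, h0]
  ring

lemma hasLaplace_powDivFact {l : ℂ} (hl : 0 < l.re) (k : ℕ) :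
    HasLaplace (powDivFact k) l (1 / l ^ (k + 1)) := by
  have hl0 := Complex.ne_zero_of_re_pos hl
  induction k with
  | zero =>
    have h := (tendsto_const_nhds (x := (1 : ℂ)).sub (tendsto_cexp_mul_powDivFact hl 0)).div_const l
    rw [sub_zero] at h
    rw [zero_add, pow_one]
    refine h.congr' ?_
    filter_upwards [eventually_ge_atTop 0] with t ht
    simp [lapPartial_powDivFact_zero hl0 ht, powDivFact]
  | succ k ih =>
    have h := (ih.sub (tendsto_cexp_mul_powDivFact hl (k + 1))).div_const l
    rw [sub_zero, div_div, ← pow_succ] at h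
    refine h.congr' ?_
    filter_upwards [eventually_ge_atTop 0] with t ht
    rw [lapPartial_powDivFact_succ hl0 k ht]

lemma exists_norm_lapPartial_powDivFact_le {l : ℂ} (hl : 0 < l.re) (k : ℕ) :
    ∃ C, ∀ t, 0 ≤ t → ‖lapPartial (powDivFact k) l t‖ ≤ C := by
  have hl0 := Complex.ne_zero_of_re_pos hl
  induction k with
  | zero =>
    refine ⟨(1 + 1) / ‖l‖, fun t ht => ?_⟩
    rw [lapPartial_powDivFact_zero hl0 ht, norm_div]
    gcongr
    refine (norm_sub_le _ _).trans (add_le_add norm_one.le ?_)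
    simpa [powDivFact] using norm_cexp_mul_powDivFact_le hl 0 ht
  | succ k ih =>
    obtain ⟨C, hC⟩ := ih
    refine ⟨(C + 1 / l.re ^ (k + 1)) / ‖l‖, fun t ht => ?_⟩
    rw [lapPartial_powDivFact_succ hl0 k ht, norm_div]
    gcongr
    exact (norm_sub_le _ _).trans (add_le_add (hC t ht) (norm_cexp_mul_powDivFact_le hl _ ht))

section Multivariate

variable {n : ℕ}

lemma mLapPartial_prod (g : Fin n → ℝ → ℂ) (l : Fin n → ℂ) (t : Fin n → ℝ) :
    mLapPartial n (fun s => ∏ i, g i (s i)) l t = ∏ i, lapPartial (g i) (l i) (t i) := by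
  have hsplit : ∀ s : Fin n → ℝ, Complex.exp (-(∑ i, l i * s i)) * ∏ i, g i (s i)
      = ∏ i, Complex.exp (-(l i * s i)) * g i (s i) := by
    intro s
    rw [Finset.prod_mul_distrib, ← Finset.sum_neg_distrib, Complex.exp_sum]
  simp only [mLapPartial, lapPartial, hsplit, volume_pi, Measure.restrict_pi_pi]
  exact integral_fintype_prod_eq_prod fun i (s : ℝ) => Complex.exp (-(l i * s)) * g i s

lemma hasMLaplace_prod {g : Fin n → ℝ → ℂ} {l G : Fin n → ℂ}
    (h : ∀ i, HasLaplace (g i) (l i) (G i)) :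
    HasMLaplace n (fun s => ∏ i, g i (s i)) l (∏ i, G i) := by
  simp only [HasMLaplace, funext (mLapPartial_prod g l)]
  exact tendsto_finsetProd _ fun i _ =>
    (h i).comp (tendsto_atTop_atTop.2 fun b => ⟨fun _ => b, fun t ht => ht i⟩)

lemma mem_mOmegaB_prod {g : Fin n → ℝ → ℂ} {l : Fin n → ℂ}
    (h : ∀ i, ∃ C, ∀ t, 0 ≤ t → ‖lapPartial (g i) (l i) t‖ ≤ C) :
    l ∈ mOmegaB n (fun s => ∏ i, g i (s i)) := by
  choose C hC using h
  rw [mOmegaB, mem_ofPred_eq, isBounded_iff_forall_norm_le]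
  refine ⟨∏ i, C i, ?_⟩
  rintro _ ⟨t, ht, rfl⟩
  rw [mLapPartial_prod, norm_prod]
  exact Finset.prod_le_prod (fun i _ => norm_nonneg _) fun i _ => hC i (t i) (ht i)

lemma mLapPartial_sub {f₁ f₂ : (Fin n → ℝ) → ℂ} (hf₁ : LocallyIntegrable f₁)
    (hf₂ : LocallyIntegrable f₂) (l : Fin n → ℂ) (t : Fin n → ℝ) :
    mLapPartial n (f₁ - f₂) l t = mLapPartial n f₁ l t - mLapPartial n f₂ l t := by
  have hbox : ∀ f : (Fin n → ℝ) → ℂ, LocallyIntegrable f →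
      IntegrableOn (fun s => Complex.exp (-(∑ i, l i * s i)) * f s)
        (pi univ fun i => Ioc 0 (t i)) := fun f hf =>
    ((hf.continuous_mul (by fun_prop)).integrableOn_isCompact isCompact_Icc).mono_set
      (pi_univ_Icc 0 t ▸ pi_mono fun i _ => Ioc_subset_Icc_self)
  simp only [mLapPartial, Pi.sub_apply, mul_sub]
  exact integral_sub (hbox f₁ hf₁) (hbox f₂ hf₂)

lemma HasMLaplace.sub {f₁ f₂ : (Fin n → ℝ) → ℂ} {l : Fin n → ℂ} {F₁ F₂ : ℂ}
    (hf₁ : LocallyIntegrable f₁) (hf₂ : LocallyIntegrable f₂)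
    (h₁ : HasMLaplace n f₁ l F₁) (h₂ : HasMLaplace n f₂ l F₂) :
    HasMLaplace n (f₁ - f₂) l (F₁ - F₂) := by
  simp only [HasMLaplace, funext (mLapPartial_sub hf₁ hf₂ l)]
  exact Filter.Tendsto.sub h₁ h₂

lemma mem_mOmegaB_sub {f₁ f₂ : (Fin n → ℝ) → ℂ} {l : Fin n → ℂ}
    (hf₁ : LocallyIntegrable f₁) (hf₂ : LocallyIntegrable f₂)
    (h₁ : l ∈ mOmegaB n f₁) (h₂ : l ∈ mOmegaB n f₂) : l ∈ mOmegaB n (f₁ - f₂) := by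
  refine (Bornology.IsBounded.sub (E := ℂ) h₁ h₂).subset ?_
  rintro _ ⟨t, ht, rfl⟩
  rw [mLapPartial_sub hf₁ hf₂]
  exact Set.sub_mem_sub ⟨t, ht, rfl⟩ ⟨t, ht, rfl⟩

def powDivFactPi (k : Fin n → ℕ) (s : Fin n → ℝ) : ℂ := ∏ i, powDivFact (k i) (s i)

lemma continuous_powDivFactPi (k : Fin n → ℕ) : Continuous (powDivFactPi k) :=
  continuous_finsetProd _ fun i _ => (continuous_powDivFact (k i)).comp (continuous_apply i)

lemma hasMLaplace_powDivFactPi {l : Fin n → ℂ} (hl : ∀ i, 0 < (l i).re) (k : Fin n → ℕ) :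
    HasMLaplace n (powDivFactPi k) l (∏ i, 1 / l i ^ (k i + 1)) :=
  hasMLaplace_prod fun i => hasLaplace_powDivFact (hl i) (k i)

lemma mem_mOmegaB_powDivFactPi {l : Fin n → ℂ} (hl : ∀ i, 0 < (l i).re) (k : Fin n → ℕ) :
    l ∈ mOmegaB n (powDivFactPi k) :=
  mem_mOmegaB_prod fun i => exists_norm_lapPartial_powDivFact_le (hl i) (k i)

end Multivariate

lemma not_ae_imp_eq_zero_of_isOpen {X M : Type*} [TopologicalSpace X] [MeasurableSpace X]
    [Zero M] {μ : Measure X} [μ.IsOpenPosMeasure] {P : X → Prop} {f : X → M} {U : Set X}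
    (hU : IsOpen U) (hne : U.Nonempty) (hUf : ∀ x ∈ U, P x ∧ f x ≠ 0) :
    ¬ ∀ᵐ x ∂μ, P x → f x = 0 := fun h =>
  (hU.measure_pos μ hne).ne' <| measure_mono_null
    (fun x hx (hPf : P x → f x = 0) => (hUf x hx).2 (hPf (hUf x hx).1)) (ae_iff.1 h)

lemma hasMLaplace_powDivFactPi_sub_swap {l : Fin 2 → ℂ} (hl : ∀ i, 0 < (l i).re) :
    HasMLaplace 2 (powDivFactPi ![1, 2] - powDivFactPi ![2, 1]) l
      ((l 0 - l 1) / (l 0 ^ 3 * l 1 ^ 3)) := by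
  have h := (hasMLaplace_powDivFactPi hl ![1, 2]).sub
    (continuous_powDivFactPi _).locallyIntegrable (continuous_powDivFactPi _).locallyIntegrable
    (hasMLaplace_powDivFactPi hl ![2, 1])
  have hl₀ := Complex.ne_zero_of_re_pos (hl 0)
  have hl₁ := Complex.ne_zero_of_re_pos (hl 1)
  convert h using 1
  simp only [Fin.prod_univ_two, Matrix.cons_val_zero, Matrix.cons_val_one]
  field_simp
  ring

lemma powDivFactPi_sub_swap_apply (t : Fin 2 → ℝ) :
    (powDivFactPi ![1, 2] - powDivFactPi ![2, 1]) t = ((t 0 * t 1 * (t 1 - t 0) / 2 : ℝ) : ℂ) := by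
  simp [powDivFactPi, powDivFact, Fin.prod_univ_two]
  ring

lemma mem_mOmegaB_powDivFactPi_sub_swap {l : Fin 2 → ℂ} (hl : ∀ i, 0 < (l i).re) :
    l ∈ mOmegaB 2 (powDivFactPi ![1, 2] - powDivFactPi ![2, 1]) :=
  mem_mOmegaB_sub (continuous_powDivFactPi _).locallyIntegrable
    (continuous_powDivFactPi _).locallyIntegrable
    (mem_mOmegaB_powDivFactPi hl _) (mem_mOmegaB_powDivFactPi hl _)

lemma not_ae_powDivFactPi_sub_swap_eq_zero :
    ¬ ∀ᵐ t : Fin 2 → ℝ, (∀ i, 0 ≤ t i) → (powDivFactPi ![1, 2] - powDivFactPi ![2, 1]) t = 0 := by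
  refine not_ae_imp_eq_zero_of_isOpen (U := {t | 0 < t 0} ∩ {t | t 0 < t 1})
    ((isOpen_lt continuous_const (continuous_apply 0)).inter
      (isOpen_lt (continuous_apply 0) (continuous_apply 1)))
    ⟨![1, 2], by norm_num⟩ ?_
  rintro t ⟨h₀ : 0 < t 0, h₁ : t 0 < t 1⟩
  have h₁' := sub_pos.2 h₁
  refine ⟨Fin.forall_fin_two.2 ⟨h₀.le, (h₀.trans h₁).le⟩, ?_⟩
  rw [powDivFactPi_sub_swap_apply, Complex.ofReal_ne_zero]
  exact (div_pos (mul_pos (mul_pos h₀ (h₀.trans h₁)) h₁') two_pos).ne'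

theorem stmt12 (f : (Fin 2 → ℝ) → ℂ)
    (hf : ∀ t : Fin 2 → ℝ, f t = (((t 0) * (t 1) ^ 2 / 2 - (t 0) ^ 2 / 2 * (t 1) : ℝ) : ℂ)) :
    (∀ l1 l2 : ℂ, 0 < l1.re → 0 < l2.re →
        HasMLaplace 2 f ![l1, l2] ((l1 - l2) / (l1 ^ 3 * l2 ^ 3))) ∧
    ¬ (∀ᵐ t : Fin 2 → ℝ, (∀ i, 0 ≤ t i) → f t = 0) ∧
    ¬ IsMUniquenessFamily 2 (fun (k : ℕ) (_ : Fin 2) => ((k : ℂ) + 1)) := by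
  have hf_eq : f = powDivFactPi ![1, 2] - powDivFactPi ![2, 1] := by
    funext t
    rw [hf, powDivFactPi_sub_swap_apply]
    push_cast
    ring
  subst hf_eq
  refine ⟨fun l₁ l₂ h₁ h₂ => hasMLaplace_powDivFactPi_sub_swap (Fin.forall_fin_two.2 ⟨h₁, h₂⟩),
    not_ae_powDivFactPi_sub_swap_eq_zero, fun hU => not_ae_powDivFactPi_sub_swap_eq_zero ?_⟩
  have hpos : ∀ k : ℕ, 0 < ((k : ℂ) + 1).re := fun k => by simp; positivity
  have hloc := (continuous_powDivFactPi ![1, 2]).sub (continuous_powDivFactPi ![2, 1])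
  refine hU _ (hloc.locallyIntegrable.locallyIntegrableOn _)
    ⟨0, fun _ => EReal.zero_ne_top, fun l hl => ?_, fun k _ => EReal.coe_pos.2 (hpos k)⟩
    fun k => by simpa using hasMLaplace_powDivFactPi_sub_swap fun _ => hpos k
  have hl' : ∀ i, 0 < (l i).re := fun i => EReal.coe_pos.1 (hl i)
  exact ⟨mem_mOmegaB_powDivFactPi_sub_swap hl', _, hasMLaplace_powDivFactPi_sub_swap hl'⟩

end
end

section
/- Let γ ∈ (0,1) and let λ ∈ ℂ with Re λ > 0. Then |(λ^γ − 1)/(λ^γ + 1)| ≤ |(λ − 1)/(λ + 1)|, where λ^γ denotes the principal power; moreover, equality holds if and only if λ = 1. -/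
open MeasureTheory Filter Set

noncomputable section

/-! Write `λ = exp w` with `w = log λ = t + iθ`, `|θ| < π/2`. Then
`|(e^w - 1)/(e^w + 1)|² = (cosh t - cos θ)/(cosh t + cos θ)`, which grows with `cosh t` and
decreases with `cos θ`. Since `λ^γ = exp (γ w)`, passing to `λ^γ` shrinks `|t|` and `|θ|`, so it
lowers `cosh t` and raises `cos θ`, strictly unless `t = θ = 0`. -/

theorem Complex.sq_norm_exp_add_ofReal (w : ℂ) (c : ℝ) (hc : c ^ 2 = 1) :
    ‖Complex.exp w + c‖ ^ 2 = 2 * Real.exp w.re * (Real.cosh w.re + c * Real.cos w.im) := by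
  rw [Complex.sq_norm, Complex.normSq_apply, Real.cosh_eq, Real.exp_neg]
  simp only [Complex.add_re, Complex.add_im, Complex.exp_re, Complex.exp_im, Complex.ofReal_re,
    Complex.ofReal_im, add_zero]
  field_simp
  linear_combination (Real.exp w.re) ^ 2 * Real.sin_sq_add_cos_sq w.im + hc

theorem Complex.sq_norm_exp_sub_one_div_exp_add_one (w : ℂ) :
    ‖(Complex.exp w - 1) / (Complex.exp w + 1)‖ ^ 2 =
      (Real.cosh w.re - Real.cos w.im) / (Real.cosh w.re + Real.cos w.im) := by
  have hminus := Complex.sq_norm_exp_add_ofReal w (-1) (by norm_num)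
  have hplus := Complex.sq_norm_exp_add_ofReal w 1 (by norm_num)
  push_cast at hminus hplus
  simp only [← sub_eq_add_neg, neg_one_mul, one_mul] at hminus hplus
  rw [norm_div, div_pow, hminus, hplus, mul_div_mul_left _ _ (by positivity)]

theorem sub_div_add_le_sub_div_add {a a' b b' : ℝ} (ha' : 0 < a') (ha : a' ≤ a) (hb : 0 < b)
    (hb' : b ≤ b') :
    (a' - b') / (a' + b') ≤ (a - b) / (a + b) ∧
      ((a' - b') / (a' + b') = (a - b) / (a + b) ↔ a' = a ∧ b' = b) := by
  have hden' : 0 < a' + b' := by linarith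
  have hden : 0 < a + b := by linarith
  refine ⟨?_, ⟨fun h => ?_, fun ⟨rfl, rfl⟩ => rfl⟩⟩
  · rw [div_le_div_iff₀ hden' hden]
    nlinarith [mul_le_mul_of_nonneg_right ha hb.le, mul_le_mul_of_nonneg_left hb' (ha'.le.trans ha)]
  · rw [div_eq_div_iff hden'.ne' hden.ne'] at h
    have hcross : a' * b = a * b' := by linarith
    have h1 : a' * b ≤ a * b := mul_le_mul_of_nonneg_right ha hb.le
    have h2 : a * b ≤ a * b' := mul_le_mul_of_nonneg_left hb' (ha'.le.trans ha)
    exact ⟨mul_right_cancel₀ hb.ne' (by linarith),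
      (mul_left_cancel₀ (ha'.trans_le ha).ne' (by linarith)).symm⟩

theorem norm_exp_sub_one_div_exp_add_one_le {v w : ℂ} (hre : |v.re| ≤ |w.re|)
    (him : |v.im| ≤ |w.im|) (hw : |w.im| < Real.pi / 2) :
    ‖(Complex.exp v - 1) / (Complex.exp v + 1)‖ ≤ ‖(Complex.exp w - 1) / (Complex.exp w + 1)‖ ∧
      (‖(Complex.exp v - 1) / (Complex.exp v + 1)‖ =
          ‖(Complex.exp w - 1) / (Complex.exp w + 1)‖ ↔
        |v.re| = |w.re| ∧ |v.im| = |w.im|) := by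
  have hwpi : |w.im| ≤ Real.pi := by linarith [Real.pi_pos]
  have hcos_pos : 0 < Real.cos w.im := by
    rw [← Real.cos_abs]
    exact Real.cos_pos_of_mem_Ioo ⟨by linarith [abs_nonneg w.im, Real.pi_pos], hw⟩
  have hcos : Real.cos w.im ≤ Real.cos v.im := by
    rw [← Real.cos_abs v.im, ← Real.cos_abs w.im]
    exact Real.cos_le_cos_of_nonneg_of_le_pi (abs_nonneg _) hwpi him
  have hcos_iff : Real.cos v.im = Real.cos w.im ↔ |v.im| = |w.im| := by
    rw [← Real.cos_abs v.im, ← Real.cos_abs w.im]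
    exact Real.injOn_cos.eq_iff ⟨abs_nonneg _, him.trans hwpi⟩ ⟨abs_nonneg _, hwpi⟩
  have hcosh_iff : Real.cosh v.re = Real.cosh w.re ↔ |v.re| = |w.re| := by
    simp only [le_antisymm_iff, Real.cosh_le_cosh]
  obtain ⟨hle, heq⟩ := sub_div_add_le_sub_div_add (Real.cosh_pos v.re)
    (Real.cosh_le_cosh.mpr hre) hcos_pos hcos
  rw [← Complex.sq_norm_exp_sub_one_div_exp_add_one, ← Complex.sq_norm_exp_sub_one_div_exp_add_one]
    at hle heq
  rw [hcosh_iff, hcos_iff] at heq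
  exact ⟨(pow_le_pow_iff_left₀ (norm_nonneg _) (norm_nonneg _) two_ne_zero).mp hle,
    (sq_eq_sq₀ (norm_nonneg _) (norm_nonneg _)).symm.trans heq⟩

theorem abs_mul_le_abs_and_eq_iff {γ : ℝ} (hγ : γ ∈ Set.Ioo (0 : ℝ) 1) (x : ℝ) :
    |x * γ| ≤ |x| ∧ (|x * γ| = |x| ↔ x = 0) := by
  obtain ⟨hγ0, hγ1⟩ := hγ
  rw [abs_mul, abs_of_pos hγ0]
  refine ⟨mul_le_of_le_one_right (abs_nonneg x) hγ1.le, fun h => ?_, fun h => by simp [h]⟩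
  by_contra hx
  have := mul_lt_of_lt_one_right (abs_pos.mpr hx) hγ1
  linarith

theorem stmt17 (γ : ℝ) (hγ : γ ∈ Set.Ioo (0:ℝ) 1) (l : ℂ) (hl : 0 < l.re) :
    ‖(l ^ ((γ : ℝ) : ℂ) - 1) / (l ^ ((γ : ℝ) : ℂ) + 1)‖ ≤
      ‖(l - 1) / (l + 1)‖ ∧
    (‖(l ^ ((γ : ℝ) : ℂ) - 1) / (l ^ ((γ : ℝ) : ℂ) + 1)‖ =
      ‖(l - 1) / (l + 1)‖ ↔ l = 1) := by
  have hl0 : l ≠ 0 := fun h => by simp [h] at hl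
  have harg : |(Complex.log l).im| < Real.pi / 2 := by
    simpa [Complex.log_im] using Complex.abs_arg_lt_pi_div_two_iff.mpr (Or.inl hl)
  obtain ⟨hre, hre_iff⟩ := abs_mul_le_abs_and_eq_iff hγ (Complex.log l).re
  obtain ⟨him, him_iff⟩ := abs_mul_le_abs_and_eq_iff hγ (Complex.log l).im
  have key := norm_exp_sub_one_div_exp_add_one_le (v := Complex.log l * γ)
    (by simpa using hre) (by simpa using him) harg
  rw [← Complex.cpow_def_of_ne_zero hl0, Complex.exp_log hl0] at key
  refine ⟨key.1, key.2.trans ?_⟩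
  rw [Complex.re_mul_ofReal, Complex.im_mul_ofReal, hre_iff, him_iff]
  constructor
  · intro h
    rw [← Complex.exp_log hl0, Complex.ext (w := 0) h.1 h.2, Complex.exp_zero]
  · rintro rfl
    simp
end
end

section
/- Let γ ∈ (0,1) and let (λ_k)_{k∈ℕ} be a sequence of complex numbers with Re λ_k > 0 for all k ∈ ℕ. If ∑_{k=1}^∞ [1 − |(λ_k − 1)/(λ_k + 1)|] = +∞, then ∑_{k=1}^∞ [1 − |(λ_k^γ − 1)/(λ_k^γ + 1)|] = +∞, where λ_k^γ denotes the principal power. -/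
open MeasureTheory Filter Set

noncomputable section

open Complex Real

/-!
Write `d z = 1 - ‖(z - 1) / (z + 1)‖`. Since `‖z + 1‖ ^ 2 - ‖z - 1‖ ^ 2 = 4 * re z`, on the right
half-plane `d z` lies between `2 * re z / ‖z + 1‖ ^ 2` and `4 * re z / ‖z + 1‖ ^ 2`.
For `w = z ^ γ` one has `‖w‖ = r ^ γ` with `r = ‖z‖`, and `|arg w| = γ * |arg z| ≤ γ * π / 2`,
so `re w ≥ cos (γ * π / 2) * ‖w‖`. Moreover `re z / ‖z + 1‖ ^ 2 ≤ r / (r + 1) ^ 2`, and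
`t ↦ t / (t + 1) ^ 2` is invariant under `t ↦ t⁻¹` and increasing on `(0, 1]`, while `r ^ γ`
lies between `r` and `1`.
Together, `d (z ^ γ) ≥ cos (γ * π / 2) / 2 * d z`, and divergence transfers by comparison.
-/

namespace Complex

lemma sq_norm_add_one_sub_sq_norm_sub_one (z : ℂ) :
    ‖z + 1‖ ^ 2 - ‖z - 1‖ ^ 2 = 4 * z.re := by
  simp only [Complex.sq_norm, normSq_apply, add_re, add_im, sub_re, sub_im, one_re, one_im]
  ring

lemma norm_sub_one_le_norm_add_one {z : ℂ} (hz : 0 ≤ z.re) : ‖z - 1‖ ≤ ‖z + 1‖ := by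
  have := sq_norm_add_one_sub_sq_norm_sub_one z
  exact (pow_le_pow_iff_left₀ (norm_nonneg _) (norm_nonneg _) two_ne_zero).mp (by linarith)

lemma norm_sub_one_div_add_one_le_one {z : ℂ} (hz : 0 ≤ z.re) : ‖(z - 1) / (z + 1)‖ ≤ 1 := by
  rw [norm_div]
  exact div_le_one_of_le₀ (norm_sub_one_le_norm_add_one hz) (norm_nonneg _)

lemma one_sub_norm_div_mul_sq (z : ℂ) :
    (1 - ‖(z - 1) / (z + 1)‖) * ‖z + 1‖ ^ 2 = (‖z + 1‖ - ‖z - 1‖) * ‖z + 1‖ := by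
  rcases eq_or_ne (z + 1) 0 with h | h
  · simp [h]
  have : ‖z + 1‖ ≠ 0 := norm_ne_zero_iff.mpr h
  rw [norm_div]
  field_simp

lemma two_mul_re_div_sq_le_one_sub_norm_div (z : ℂ) :
    2 * z.re / ‖z + 1‖ ^ 2 ≤ 1 - ‖(z - 1) / (z + 1)‖ := by
  rcases eq_or_ne (z + 1) 0 with h | h
  · simp [h]
  have hA : 0 < ‖z + 1‖ := norm_pos_iff.mpr h
  rw [div_le_iff₀ (by positivity), one_sub_norm_div_mul_sq]
  nlinarith [sq_norm_add_one_sub_sq_norm_sub_one z, sq_nonneg (‖z + 1‖ - ‖z - 1‖)]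

lemma one_sub_norm_div_le_four_mul_re_div_sq {z : ℂ} (hz : 0 ≤ z.re) :
    1 - ‖(z - 1) / (z + 1)‖ ≤ 4 * z.re / ‖z + 1‖ ^ 2 := by
  have hBA := norm_sub_one_le_norm_add_one hz
  have hA : 0 < ‖z + 1‖ := by
    have := re_le_norm (z + 1)
    rw [add_re, one_re] at this
    linarith
  rw [le_div_iff₀ (by positivity), one_sub_norm_div_mul_sq]
  nlinarith [sq_norm_add_one_sub_sq_norm_sub_one z,
    mul_nonneg (sub_nonneg.2 hBA) (norm_nonneg (z - 1))]

lemma cos_mul_pi_div_two_mul_rpow_le_re_cpow {γ : ℝ} (hγ0 : 0 ≤ γ) (hγ1 : γ ≤ 1) {z : ℂ}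
    (hz : 0 ≤ z.re) : Real.cos (γ * (π / 2)) * ‖z‖ ^ γ ≤ (z ^ (γ : ℂ)).re := by
  have harg : |arg z| ≤ π / 2 := abs_arg_le_pi_div_two_iff.mpr hz
  rw [cpow_ofReal_re, mul_comm]
  refine mul_le_mul_of_nonneg_left ?_ (by positivity)
  rw [← Real.cos_abs (arg z * γ), abs_mul, abs_of_nonneg hγ0, mul_comm γ]
  exact Real.cos_le_cos_of_nonneg_of_le_pi (by positivity)
    (by nlinarith [Real.pi_pos]) (mul_le_mul_of_nonneg_right harg hγ0)

lemma re_div_sq_norm_add_one_le (z : ℂ) : z.re / ‖z + 1‖ ^ 2 ≤ ‖z‖ / (‖z‖ + 1) ^ 2 := by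
  rcases eq_or_ne (z + 1) 0 with h | h
  · rw [h, norm_zero, zero_pow two_ne_zero, div_zero]
    positivity
  have hA : 0 < ‖z + 1‖ := norm_pos_iff.mpr h
  have hA2 : ‖z + 1‖ ^ 2 = ‖z‖ ^ 2 + 2 * z.re + 1 := by
    simp only [Complex.sq_norm, normSq_apply, add_re, add_im, one_re, one_im]
    ring
  rw [div_le_div_iff₀ (by positivity) (by positivity), hA2]
  nlinarith [re_le_norm z, norm_nonneg z]

end Complex

lemma div_add_one_sq_le_div_add_one_sq_iff {a b : ℝ} (ha : 0 < a) (hb : 0 < b) :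
    a / (a + 1) ^ 2 ≤ b / (b + 1) ^ 2 ↔ 0 ≤ (b - a) * (1 - a * b) := by
  rw [div_le_div_iff₀ (by positivity) (by positivity), ← sub_nonneg]
  ring_nf

lemma div_add_one_sq_le_rpow_div_rpow_add_one_sq {r γ : ℝ} (hr : 0 < r) (hγ0 : 0 ≤ γ)
    (hγ1 : γ ≤ 1) : r / (r + 1) ^ 2 ≤ r ^ γ / (r ^ γ + 1) ^ 2 := by
  rw [div_add_one_sq_le_div_add_one_sq_iff hr (by positivity)]
  rcases le_total 1 r with h | h
  · have h1 : 1 ≤ r ^ γ := Real.one_le_rpow h hγ0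
    have h2 : r ^ γ ≤ r := Real.rpow_le_self_of_one_le h hγ1
    exact mul_nonneg_of_nonpos_of_nonpos (by linarith) (by nlinarith)
  · have h1 : r ^ γ ≤ 1 := Real.rpow_le_one hr.le h hγ0
    have h2 : r ≤ r ^ γ := Real.self_le_rpow_of_le_one hr.le h hγ1
    exact mul_nonneg (by linarith) (by nlinarith)

lemma cos_mul_pi_div_two_div_two_mul_one_sub_norm_div_le {γ : ℝ} (hγ0 : 0 ≤ γ) (hγ1 : γ ≤ 1)
    {z : ℂ} (hz : 0 < z.re) :
    Real.cos (γ * (π / 2)) / 2 * (1 - ‖(z - 1) / (z + 1)‖)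
      ≤ 1 - ‖(z ^ (γ : ℂ) - 1) / (z ^ (γ : ℂ) + 1)‖ := by
  set c := Real.cos (γ * (π / 2))
  set w := z ^ (γ : ℂ)
  have hc : 0 ≤ c :=
    Real.cos_nonneg_of_mem_Icc ⟨by nlinarith [Real.pi_pos], by nlinarith [Real.pi_pos]⟩
  have hr : 0 < ‖z‖ := norm_pos_iff.mpr fun h => by simp [h] at hz
  have hw : ‖w‖ = ‖z‖ ^ γ := norm_cpow_real z γ
  have hw_re : c * ‖z‖ ^ γ ≤ w.re := cos_mul_pi_div_two_mul_rpow_le_re_cpow hγ0 hγ1 hz.le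
  have hw_re_nonneg : 0 ≤ w.re := le_trans (by positivity) hw_re
  have hM : 0 < ‖w + 1‖ := by
    have := re_le_norm (w + 1)
    rw [add_re, one_re] at this
    linarith
  have hM_le : ‖w + 1‖ ≤ ‖z‖ ^ γ + 1 := by simpa [hw] using norm_add_le w 1
  calc c / 2 * (1 - ‖(z - 1) / (z + 1)‖)
      ≤ c / 2 * (4 * z.re / ‖z + 1‖ ^ 2) := by
        gcongr; exact one_sub_norm_div_le_four_mul_re_div_sq hz.le
    _ = 2 * c * (z.re / ‖z + 1‖ ^ 2) := by ring
    _ ≤ 2 * c * (‖z‖ / (‖z‖ + 1) ^ 2) := by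
        gcongr 2 * c * ?_; exact re_div_sq_norm_add_one_le z
    _ ≤ 2 * c * (‖z‖ ^ γ / (‖z‖ ^ γ + 1) ^ 2) := by
        gcongr 2 * c * ?_; exact div_add_one_sq_le_rpow_div_rpow_add_one_sq hr hγ0 hγ1
    _ = 2 * (c * ‖z‖ ^ γ) / (‖z‖ ^ γ + 1) ^ 2 := by ring
    _ ≤ 2 * w.re / ‖w + 1‖ ^ 2 := by gcongr
    _ ≤ 1 - ‖(w - 1) / (w + 1)‖ := two_mul_re_div_sq_le_one_sub_norm_div w

theorem stmt18 (γ : ℝ) (hγ : γ ∈ Set.Ioo (0:ℝ) 1) (lam : ℕ → ℂ)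
    (hre : ∀ k, 0 < (lam k).re)
    (hsum : ¬ Summable (fun k => 1 - ‖(lam k - 1) / (lam k + 1)‖)) :
    ¬ Summable (fun k =>
      1 - ‖(lam k ^ ((γ : ℝ) : ℂ) - 1) / (lam k ^ ((γ : ℝ) : ℂ) + 1)‖) := by
  intro hS
  apply hsum
  have hc : 0 < Real.cos (γ * (π / 2)) :=
    Real.cos_pos_of_mem_Ioo
      ⟨by nlinarith [Real.pi_pos, hγ.1], by nlinarith [Real.pi_pos, hγ.2]⟩
  refine (hS.mul_left (2 / Real.cos (γ * (π / 2)))).of_nonneg_of_le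
    (fun k => sub_nonneg.2 (norm_sub_one_div_add_one_le_one (hre k).le)) (fun k => ?_)
  have := cos_mul_pi_div_two_div_two_mul_one_sub_norm_div_le hγ.1.le hγ.2.le (hre k)
  rw [div_mul_eq_mul_div, le_div_iff₀ hc]
  linarith

end
end
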